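/- arXiv:1906.09880 — 8 statements merged into one kernel-verified Lean document; each statement's English description precedes it below -/
import Mathlib

section
/- For every pricing policy π, every time t ∈ {0,…,T} and every state s ∈ ℕ, the state-value function of the original MDP equals the expectation over lengths of the state–length value function of the modified MDP: U^π(t,s) = Σ_{ℓ=1}^{𝕃} P(ℓ)·W^π(t,s,ℓ). -/
/-! Averaging the modified value over the current length `ℓ` turns the recursion for `W` into
exactly the Bellman recursion for `U`, with the same terminal value `0`; two solutions of one
backward recursion on `{0, …, T}` with equal terminal values coincide. -/

theorem eq_of_backward_recursion {α β : Type*} {T : ℕ} (F : ℕ → (α → β) → α → β)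
    {U V : ℕ → α → β} (hT : U T = V T) (hU : ∀ t < T, U t = F t (U (t + 1)))
    (hV : ∀ t < T, V t = F t (V (t + 1))) : ∀ t ≤ T, U t = V t := by
  intro t ht
  induction ht using Nat.decreasingInduction with
  | self => exact hT
  | of_succ t htT ih => rw [hU t htT, hV t htT, ih]

theorem stmt_0_general
    (T L : ℕ)
    (P : ℕ → ℝ)
    (q : ℝ → ℕ → ℕ → ℝ)
    (π : ℕ → ℕ → ℕ → ℝ)
    (U : ℕ → ℕ → ℝ) (W : ℕ → ℕ → ℕ → ℝ)
    (hUT : ∀ s, U T s = 0)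
    (hU : ∀ t, t < T → ∀ s, U t s =
      ∑ ℓ ∈ Finset.Icc 1 L, P ℓ *
        (q (π t s ℓ) s ℓ * (π t s ℓ + U (t + 1) (s + ℓ - 1)) +
          (1 - q (π t s ℓ) s ℓ) * U (t + 1) (s - 1)))
    (hWT : ∀ s ℓ, W T s ℓ = 0)
    (hW : ∀ t, t < T → ∀ s ℓ, W t s ℓ =
      q (π t s ℓ) s ℓ *
          (π t s ℓ + ∑ ℓ' ∈ Finset.Icc 1 L, P ℓ' * W (t + 1) (s + ℓ - 1) ℓ') +
        (1 - q (π t s ℓ) s ℓ) * ∑ ℓ' ∈ Finset.Icc 1 L, P ℓ' * W (t + 1) (s - 1) ℓ') :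
    ∀ t, t ≤ T → ∀ s : ℕ, U t s = ∑ ℓ ∈ Finset.Icc 1 L, P ℓ * W t s ℓ := by
  let bellman (t : ℕ) (u : ℕ → ℝ) (s : ℕ) : ℝ :=
    ∑ ℓ ∈ Finset.Icc 1 L, P ℓ *
      (q (π t s ℓ) s ℓ * (π t s ℓ + u (s + ℓ - 1)) + (1 - q (π t s ℓ) s ℓ) * u (s - 1))
  let expectedW (t s : ℕ) : ℝ := ∑ ℓ ∈ Finset.Icc 1 L, P ℓ * W t s ℓ
  have terminal : U T = expectedW T := funext fun s => by simp [expectedW, hUT, hWT]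
  have expectedW_step : ∀ t < T, expectedW t = bellman t (expectedW (t + 1)) :=
    fun t htT => funext fun s => Finset.sum_congr rfl fun ℓ _ => by rw [hW t htT s ℓ]
  exact fun t ht => congrFun (eq_of_backward_recursion bellman terminal
    (fun t htT => funext (hU t htT)) expectedW_step t ht)

/-- For every pricing policy π, every time t ∈ {0,…,T} and every state s ∈ ℕ,
the state-value function of the original MDP equals the expectation over lengths of the
state–length value function of the modified MDP. -/
theorem stmt_0
    (T L : ℕ) (hL : 1 ≤ L)
    (P : ℕ → ℝ) (hPnn : ∀ ℓ, 0 ≤ P ℓ)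
    (hPsum : ∑ ℓ ∈ Finset.Icc 1 L, P ℓ = 1)
    (𝒱 : Set ℝ) (h𝒱 : ∀ μ ∈ 𝒱, 0 ≤ μ)
    (q : ℝ → ℕ → ℕ → ℝ) (hq01 : ∀ μ s ℓ, 0 ≤ q μ s ℓ ∧ q μ s ℓ ≤ 1)
    (π : ℕ → ℕ → ℕ → ℝ) (hπ : ∀ t s ℓ, π t s ℓ ∈ 𝒱)
    (U : ℕ → ℕ → ℝ) (W : ℕ → ℕ → ℕ → ℝ)
    (hUT : ∀ s, U T s = 0)
    (hU : ∀ t, t < T → ∀ s, U t s =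
      ∑ ℓ ∈ Finset.Icc 1 L, P ℓ *
        (q (π t s ℓ) s ℓ * (π t s ℓ + U (t + 1) (s + ℓ - 1)) +
          (1 - q (π t s ℓ) s ℓ) * U (t + 1) (s - 1)))
    (hWT : ∀ s ℓ, W T s ℓ = 0)
    (hW : ∀ t, t < T → ∀ s ℓ, W t s ℓ =
      q (π t s ℓ) s ℓ *
          (π t s ℓ + ∑ ℓ' ∈ Finset.Icc 1 L, P ℓ' * W (t + 1) (s + ℓ - 1) ℓ') +
        (1 - q (π t s ℓ) s ℓ) * ∑ ℓ' ∈ Finset.Icc 1 L, P ℓ' * W (t + 1) (s - 1) ℓ') :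
    ∀ t, t ≤ T → ∀ s : ℕ, U t s = ∑ ℓ ∈ Finset.Icc 1 L, P ℓ * W t s ℓ :=
  stmt_0_general T L P q π U W hUT hU hWT hW
end

section
/- Let f : ℝ → ℝ be positive and nonincreasing with x ↦ log f(x) concave on ℝ. Then for all reals 0 ≤ x ≤ x' and 0 < γ ≤ γ': f(x/γ)·f(x'/γ') ≥ f(x'/γ)·f(x/γ'). (Equivalently, for scaled random variables with log-concave survival function f, the ratio f(x'/γ)/f(x/γ) is nondecreasing in the scale γ.) -/
/-! Put `g = log ∘ f` and `a = x/γ'`, `b = x/γ`, `c = x'/γ'`, `d = x'/γ`, so that `a ≤ c ≤ d` and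
`b + c ≤ a + d`. Concavity gives `g a + g d ≤ g c + g (a + d - c)`, since `c` and `a + d - c` are
mirror images in `[a, d]`; as `b ≤ a + d - c` and `g` is nonincreasing, `g (a + d - c) ≤ g b`. -/

open Set

lemma ConcaveOn.map_add_map_le_map_add_map_reflect {s : Set ℝ} {g : ℝ → ℝ}
    (hg : ConcaveOn ℝ s g) {a c d : ℝ} (ha : a ∈ s) (hd : d ∈ s) (hac : a ≤ c) (hcd : c ≤ d) :
    g a + g d ≤ g c + g (a + d - c) := by
  rcases hac.trans hcd |>.eq_or_lt with had | had
  · obtain rfl : c = a := le_antisymm (had ▸ hcd) hac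
    rw [← had, add_sub_cancel_right]
  set t := (d - c) / (d - a)
  have hda : 0 < d - a := sub_pos.2 had
  have ht0 : 0 ≤ t := div_nonneg (sub_nonneg.2 hcd) hda.le
  have ht1 : t ≤ 1 := (div_le_one hda).2 (by linarith)
  have hc : t * a + (1 - t) * d = c := by
    simp only [t]
    field_simp
    ring
  have hc' : (1 - t) * a + t * d = a + d - c := by linear_combination -hc
  have h₁ := hg.2 ha hd ht0 (sub_nonneg.2 ht1) (add_sub_cancel t 1)
  have h₂ := hg.2 ha hd (sub_nonneg.2 ht1) ht0 (sub_add_cancel 1 t)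
  simp only [smul_eq_mul, hc, hc'] at h₁ h₂
  linarith

lemma ConcaveOn.map_add_map_le_of_antitone {g : ℝ → ℝ} (hg : ConcaveOn ℝ univ g)
    (hanti : Antitone g) {a b c d : ℝ} (hac : a ≤ c) (hcd : c ≤ d) (hsum : b + c ≤ a + d) :
    g a + g d ≤ g b + g c := by
  have := hg.map_add_map_le_map_add_map_reflect (mem_univ a) (mem_univ d) hac hcd
  linarith [hanti (show b ≤ a + d - c by linarith)]

/-- Scaling case of Lemma 2: for a positive nonincreasing `f` with concave
logarithm, `f(x/γ)·f(x'/γ') ≥ f(x'/γ)·f(x/γ')` whenever `0 ≤ x ≤ x'` and `0 < γ ≤ γ'`. -/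
theorem stmt_2
    (f : ℝ → ℝ) (hpos : ∀ x, 0 < f x)
    (hmono : ∀ x y : ℝ, x ≤ y → f y ≤ f x)
    (hconc : ConcaveOn ℝ Set.univ fun x => Real.log (f x))
    (x x' γ γ' : ℝ) (hx0 : 0 ≤ x) (hx : x ≤ x') (hγ0 : 0 < γ) (hγ : γ ≤ γ') :
    f (x' / γ) * f (x / γ') ≤ f (x / γ) * f (x' / γ') := by
  have hγ'0 : 0 < γ' := hγ0.trans_le hγ
  have hac : x / γ' ≤ x' / γ' := div_le_div_of_nonneg_right hx hγ'0.le
  have hcd : x' / γ' ≤ x' / γ := div_le_div_of_nonneg_left (hx0.trans hx) hγ0 hγ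
  have hsum : x / γ + x' / γ' ≤ x / γ' + x' / γ := by
    have := div_le_div_of_nonneg_left (sub_nonneg.2 hx) hγ0 hγ
    rw [sub_div, sub_div] at this
    linarith
  have hlog_anti : Antitone fun x => Real.log (f x) :=
    fun u v huv => Real.log_le_log (hpos v) (hmono u v huv)
  have key := hconc.map_add_map_le_of_antitone hlog_anti hac hcd hsum
  rw [← Real.log_le_log_iff (mul_pos (hpos _) (hpos _)) (mul_pos (hpos _) (hpos _)),
    Real.log_mul (hpos _).ne' (hpos _).ne', Real.log_mul (hpos _).ne' (hpos _).ne']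
  linarith
end

section
/- Let p : ℤ → ℝ be a probability mass function (p ≥ 0, Σ_k p(k) = 1) with p(k) = 0 for k < 0, whose support {k : p(k) > 0} is an interval of integers, and which is discretely log-concave: p(x)² ≥ p(x−1)·p(x+1) for all x ∈ ℤ. Then both the cumulative mass function P(y) := Σ_{k ≤ y} p(k) and the survival mass function P̄(y) := Σ_{k ≥ y} p(k) are discretely log-concave: P(y)² ≥ P(y−1)·P(y+1) and P̄(y)² ≥ P̄(y−1)·P̄(y+1) for all y ∈ ℤ. -/
/-!
Log-concavity together with contiguous support makes the ratio `p (k + 1) / p k` nonincreasing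
on the support, in the division-free form `p j * p (k + 1) ≤ p (j + 1) * p k` for `j ≤ k`.
Summing this over `j ≤ y` with `k = y` gives `P y * p (y + 1) ≤ p y * P (y + 1)`, and since
`P (y - 1) = P y - p y` and `P (y + 1) = P y + p (y + 1)` this is exactly
`P (y - 1) * P (y + 1) ≤ P y ^ 2`. The survival function of `p` is the cumulative function of
`k ↦ p (-k)`, which is again log-concave with contiguous support.
-/

section LogConcave

variable {p : ℤ → ℝ}

theorem mul_succ_le_succ_mul_of_logConcave (hp0 : ∀ k, 0 ≤ p k)
    (hsupp : ∀ a b c : ℤ, 0 < p a → 0 < p b → a ≤ c → c ≤ b → 0 < p c)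
    (hlc : ∀ x : ℤ, p (x - 1) * p (x + 1) ≤ p x ^ 2) {j k : ℤ} (hjk : j ≤ k) :
    p j * p (k + 1) ≤ p (j + 1) * p k := by
  rcases (hp0 j).eq_or_lt with hj | hj
  · rw [← hj, zero_mul]
    exact mul_nonneg (hp0 _) (hp0 _)
  induction k, hjk using Int.leInduction with
  | base => rw [mul_comm]
  | succ k hjk ih =>
    rcases (hp0 (k + 1 + 1)).eq_or_lt with hk2 | hk2
    · rw [← hk2, mul_zero]
      exact mul_nonneg (hp0 _) (hp0 _)
    have hk1 : 0 < p (k + 1) := hsupp j _ _ hj hk2 (by omega) (by omega)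
    have hlc' : p k * p (k + 1 + 1) ≤ p (k + 1) ^ 2 := by simpa using hlc (k + 1)
    refine le_of_mul_le_mul_right ?_ hk1
    calc p j * p (k + 1 + 1) * p (k + 1) = p j * p (k + 1) * p (k + 1 + 1) := by ring
      _ ≤ p (j + 1) * p k * p (k + 1 + 1) := mul_le_mul_of_nonneg_right ih (hp0 _)
      _ = p (j + 1) * (p k * p (k + 1 + 1)) := by ring
      _ ≤ p (j + 1) * p (k + 1) ^ 2 := mul_le_mul_of_nonneg_left hlc' (hp0 _)
      _ = p (j + 1) * p (k + 1) * p (k + 1) := by ring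

theorem summable_ite_le (hp0 : ∀ k, 0 ≤ p k) (hsum : Summable p) (y : ℤ) :
    Summable fun k => if k ≤ y then p k else 0 :=
  hsum.of_nonneg_of_le (fun k => by split_ifs <;> simp [hp0]) (fun k => by split_ifs <;> simp [hp0])

theorem tsum_ite_le_add_one (hp0 : ∀ k, 0 ≤ p k) (hsum : Summable p) (y : ℤ) :
    (∑' k, if k ≤ y + 1 then p k else 0) = (∑' k, if k ≤ y then p k else 0) + p (y + 1) := by
  rw [(summable_ite_le hp0 hsum (y + 1)).tsum_eq_add_tsum_ite (y + 1), if_pos le_rfl, add_comm]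
  congr 2
  funext k
  split_ifs <;> first | rfl | omega

theorem tsum_ite_le_comp_add_one (y : ℤ) :
    (∑' k, if k ≤ y then p (k + 1) else 0) = ∑' k, if k ≤ y + 1 then p k else 0 := by
  simpa using (Equiv.addRight (1 : ℤ)).tsum_eq fun k => if k ≤ y + 1 then p k else 0

variable (hp0 : ∀ k, 0 ≤ p k) (hsum : Summable p)
  (hsupp : ∀ a b c : ℤ, 0 < p a → 0 < p b → a ≤ c → c ≤ b → 0 < p c)
  (hlc : ∀ x : ℤ, p (x - 1) * p (x + 1) ≤ p x ^ 2)
include hp0 hsum hsupp hlc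

theorem tsum_ite_le_mul_succ_le (y : ℤ) :
    (∑' k, if k ≤ y then p k else 0) * p (y + 1) ≤ p y * ∑' k, if k ≤ y + 1 then p k else 0 := by
  rw [← tsum_mul_right, ← tsum_ite_le_comp_add_one, ← tsum_mul_left]
  refine Summable.tsum_le_tsum (fun k => ?_) ((summable_ite_le hp0 hsum y).mul_right _)
    ((summable_ite_le (fun k => hp0 (k + 1))
      (hsum.comp_injective (add_left_injective 1)) y).mul_left _)
  split_ifs with hk
  · rw [mul_comm (p y)]
    exact mul_succ_le_succ_mul_of_logConcave hp0 hsupp hlc hk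
  · simp

theorem cumulative_logConcave (y : ℤ) :
    (∑' k, if k ≤ y - 1 then p k else 0) * (∑' k, if k ≤ y + 1 then p k else 0) ≤
      (∑' k, if k ≤ y then p k else 0) ^ 2 := by
  have hprev := tsum_ite_le_add_one hp0 hsum (y - 1)
  rw [sub_add_cancel] at hprev
  have hnext := tsum_ite_le_add_one hp0 hsum y
  have key := tsum_ite_le_mul_succ_le hp0 hsum hsupp hlc y
  set F := ∑' k, if k ≤ y then p k else 0
  set F' := ∑' k, if k ≤ y + 1 then p k else 0
  linear_combination key - F' * hprev + F * hnext

end LogConcave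

theorem tsum_ite_ge_eq_tsum_ite_le_neg (p : ℤ → ℝ) (y : ℤ) :
    (∑' k, if y ≤ k then p k else 0) = ∑' k, if k ≤ -y then p (-k) else 0 := by
  simpa [le_neg] using ((Equiv.neg ℤ).tsum_eq fun k => if y ≤ k then p k else 0).symm

theorem stmt_4_general
    (p : ℤ → ℝ) (hp0 : ∀ k, 0 ≤ p k)
    (hsum : Summable p)
    (hsupp : ∀ a b c : ℤ, 0 < p a → 0 < p b → a ≤ c → c ≤ b → 0 < p c)
    (hlc : ∀ x : ℤ, p (x - 1) * p (x + 1) ≤ p x ^ 2) :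
    (∀ y : ℤ,
        (∑' k : ℤ, if k ≤ y - 1 then p k else 0) * (∑' k : ℤ, if k ≤ y + 1 then p k else 0) ≤
          (∑' k : ℤ, if k ≤ y then p k else 0) ^ 2) ∧
    (∀ y : ℤ,
        (∑' k : ℤ, if y - 1 ≤ k then p k else 0) * (∑' k : ℤ, if y + 1 ≤ k then p k else 0) ≤
          (∑' k : ℤ, if y ≤ k then p k else 0) ^ 2) := by
  refine ⟨cumulative_logConcave hp0 hsum hsupp hlc, fun y => ?_⟩
  have hreflect := cumulative_logConcave (p := fun k => p (-k)) (fun k => hp0 (-k))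
    (hsum.comp_injective neg_injective)
    (fun a b c ha hb hac hcb => hsupp (-b) (-a) (-c) hb ha (neg_le_neg hcb) (neg_le_neg hac))
    (fun x => by rw [mul_comm, neg_sub', neg_add']; exact hlc (-x)) (-y)
  simp only [tsum_ite_ge_eq_tsum_ite_le_neg p, neg_sub', neg_add']
  rwa [mul_comm]

/-- A discretely log-concave probability mass function on ℤ (vanishing on
negatives, with contiguous support) has discretely log-concave cumulative mass function
and survival mass function. -/
theorem stmt_4
    (p : ℤ → ℝ) (hp0 : ∀ k, 0 ≤ p k)
    (hsum : Summable p) (htotal : ∑' k : ℤ, p k = 1)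
    (hneg : ∀ k : ℤ, k < 0 → p k = 0)
    (hsupp : ∀ a b c : ℤ, 0 < p a → 0 < p b → a ≤ c → c ≤ b → 0 < p c)
    (hlc : ∀ x : ℤ, p (x - 1) * p (x + 1) ≤ p x ^ 2) :
    (∀ y : ℤ,
        (∑' k : ℤ, if k ≤ y - 1 then p k else 0) * (∑' k : ℤ, if k ≤ y + 1 then p k else 0) ≤
          (∑' k : ℤ, if k ≤ y then p k else 0) ^ 2) ∧
    (∀ y : ℤ,
        (∑' k : ℤ, if y - 1 ≤ k then p k else 0) * (∑' k : ℤ, if y + 1 ≤ k then p k else 0) ≤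
          (∑' k : ℤ, if y ≤ k then p k else 0) ^ 2) :=
  stmt_4_general p hp0 hsum hsupp hlc
end

section
/- For every t ∈ {0,…,T} and every state s ∈ ℕ, the optimal value function is nonincreasing in the state: U*(t,s+1) ≤ U*(t,s). -/
/-!
Backward induction on `t`. One period of the recursion is, for each length `ℓ`, the value
`max 0 (max_μ q·(μ + a - c)) + c` of posting the best price, with continuation `a` after a
sale and `c` otherwise. Passing from state `s` to `s + 1` lowers every ingredient: the
acceptance probabilities drop (harmless, since only positive gains are ever collected), and by
the induction hypothesis both continuations drop. The value is monotone in `a` because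
`q ≥ 0` and in `c` because `q ≤ 1`: it equals `max c (max_μ (q·(μ + a) + (1 - q)·c))`.
-/

open Finset

section BestPrice

variable {𝒱 : Finset ℝ} (h𝒱ne : 𝒱.Nonempty)

def bestPriceValue (q : ℝ → ℝ) (a c : ℝ) : ℝ :=
  max 0 (𝒱.sup' h𝒱ne fun μ => q μ * (μ + a - c)) + c

variable {h𝒱ne}

theorem bestPriceValue_mono_acceptance {q q' : ℝ → ℝ} (hq' : ∀ μ ∈ 𝒱, 0 ≤ q' μ)
    (hle : ∀ μ ∈ 𝒱, q' μ ≤ q μ) (a c : ℝ) :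
    bestPriceValue h𝒱ne q' a c ≤ bestPriceValue h𝒱ne q a c := by
  refine add_le_add_left (max_le (le_max_left _ _) (sup'_le _ _ fun μ hμ => ?_)) c
  have hterm : q' μ * (μ + a - c) ≤ max 0 (q μ * (μ + a - c)) := by
    rcases le_total (μ + a - c) 0 with hgain | hgain
    · exact le_max_of_le_left (mul_nonpos_of_nonneg_of_nonpos (hq' μ hμ) hgain)
    · exact le_max_of_le_right (mul_le_mul_of_nonneg_right (hle μ hμ) hgain)
  exact hterm.trans (max_le_max_left 0 (le_sup' (fun μ => q μ * (μ + a - c)) hμ))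

theorem bestPriceValue_mono_sale {q : ℝ → ℝ} (hq : ∀ μ ∈ 𝒱, 0 ≤ q μ) {a a' : ℝ} (ha : a ≤ a')
    (c : ℝ) : bestPriceValue h𝒱ne q a c ≤ bestPriceValue h𝒱ne q a' c := by
  unfold bestPriceValue
  gcongr with μ hμ
  exact hq μ hμ

theorem bestPriceValue_mono_noSale {q : ℝ → ℝ} (hq : ∀ μ ∈ 𝒱, q μ ≤ 1) (a : ℝ) {c c' : ℝ}
    (hc : c ≤ c') : bestPriceValue h𝒱ne q a c ≤ bestPriceValue h𝒱ne q a c' := by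
  unfold bestPriceValue
  set X' := 𝒱.sup' h𝒱ne fun μ => q μ * (μ + a - c')
  suffices max 0 (𝒱.sup' h𝒱ne fun μ => q μ * (μ + a - c)) ≤ max 0 X' + (c' - c) by linarith
  refine max_le (by positivity) (sup'_le _ _ fun μ hμ => ?_)
  have hterm : q μ * (μ + a - c') ≤ X' := le_sup' (fun μ => q μ * (μ + a - c')) hμ
  nlinarith [hq μ hμ, le_max_right 0 X']

end BestPrice

section Bellman

variable {𝒱 : Finset ℝ} (h𝒱ne : 𝒱.Nonempty) (P : ℕ → ℝ) (q : ℝ → ℕ → ℕ → ℝ) (S : Finset ℕ)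

/-- State `s` moves to `s + ℓ - 1` after a sale of length `ℓ` and to
`s - 1` (truncated at `0`) otherwise. -/
def bellman (W : ℕ → ℝ) (s : ℕ) : ℝ :=
  ∑ ℓ ∈ S, P ℓ * bestPriceValue h𝒱ne (fun μ => q μ s ℓ) (W (s + ℓ - 1)) (W (s - 1))

variable {h𝒱ne P q S}

theorem Antitone.bellman {W : ℕ → ℝ} (hW : Antitone W) (hP : ∀ ℓ, 0 ≤ P ℓ)
    (hq01 : ∀ μ s ℓ, 0 ≤ q μ s ℓ ∧ q μ s ℓ ≤ 1) (hqs : ∀ μ s s' ℓ, s ≤ s' → q μ s' ℓ ≤ q μ s ℓ) :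
    Antitone (bellman h𝒱ne P q S W) := by
  refine antitone_nat_of_succ_le fun s => sum_le_sum fun ℓ _ => ?_
  refine mul_le_mul_of_nonneg_left ?_ (hP ℓ)
  calc bestPriceValue h𝒱ne (fun μ => q μ (s + 1) ℓ) (W (s + 1 + ℓ - 1)) (W (s + 1 - 1))
      ≤ bestPriceValue h𝒱ne (fun μ => q μ s ℓ) (W (s + 1 + ℓ - 1)) (W (s + 1 - 1)) :=
        bestPriceValue_mono_acceptance (fun μ _ => (hq01 μ _ ℓ).1)
          (fun μ _ => hqs μ s _ ℓ (Nat.le_succ s)) _ _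
    _ ≤ bestPriceValue h𝒱ne (fun μ => q μ s ℓ) (W (s + ℓ - 1)) (W (s + 1 - 1)) :=
        bestPriceValue_mono_sale (fun μ _ => (hq01 μ s ℓ).1) (hW (by omega)) _
    _ ≤ bestPriceValue h𝒱ne (fun μ => q μ s ℓ) (W (s + ℓ - 1)) (W (s - 1)) :=
        bestPriceValue_mono_noSale (fun μ _ => (hq01 μ s ℓ).2) _ (hW (by omega))

end Bellman

theorem stmt_6_general
    (T L : ℕ)
    (P : ℕ → ℝ) (hPnn : ∀ ℓ, 0 ≤ P ℓ)
    (𝒱 : Finset ℝ) (h𝒱ne : 𝒱.Nonempty)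
    (q : ℝ → ℕ → ℕ → ℝ)
    (hq01 : ∀ μ s ℓ, 0 ≤ q μ s ℓ ∧ q μ s ℓ ≤ 1)
    (hqs : ∀ μ s s' ℓ, s ≤ s' → q μ s' ℓ ≤ q μ s ℓ)
    (U : ℕ → ℕ → ℝ)
    (hUT : ∀ s, U T s = 0)
    (hU : ∀ t, t < T → ∀ s, U t s =
      ∑ ℓ ∈ Finset.Icc 1 L, P ℓ *
        (max 0 (𝒱.sup' h𝒱ne fun μ =>
            q μ s ℓ * (μ + U (t + 1) (s + ℓ - 1) - U (t + 1) (s - 1)))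
          + U (t + 1) (s - 1))) :
    ∀ t, t ≤ T → ∀ s : ℕ, U t (s + 1) ≤ U t s := by
  intro t ht
  suffices Antitone (U t) from fun s => this (Nat.le_succ s)
  induction ht using Nat.decreasingInduction with
  | self => exact fun _ _ _ => by rw [hUT, hUT]
  | of_succ t ht ih =>
    have hBellman : U t = bellman h𝒱ne P q (Icc 1 L) (U (t + 1)) := funext (hU t ht)
    exact hBellman ▸ ih.bellman hPnn hq01 hqs

/-- The optimal value function of the pricing MDP is nonincreasing in the
state: `U*(t,s+1) ≤ U*(t,s)` for every `t ∈ {0,…,T}` and state `s`. -/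
theorem stmt_6
    (T L : ℕ) (hL : 1 ≤ L)
    (P : ℕ → ℝ) (hPnn : ∀ ℓ, 0 ≤ P ℓ)
    (hPsum : ∑ ℓ ∈ Finset.Icc 1 L, P ℓ = 1)
    (V : ℝ) (hV : 0 < V)
    (𝒱 : Finset ℝ) (h𝒱ne : 𝒱.Nonempty) (h𝒱 : ∀ μ ∈ 𝒱, 0 ≤ μ ∧ μ ≤ V)
    (q : ℝ → ℕ → ℕ → ℝ)
    (hq01 : ∀ μ s ℓ, 0 ≤ q μ s ℓ ∧ q μ s ℓ ≤ 1)
    (hqμ : ∀ μ μ' s ℓ, μ ≤ μ' → q μ' s ℓ ≤ q μ s ℓ)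
    (hqs : ∀ μ s s' ℓ, s ≤ s' → q μ s' ℓ ≤ q μ s ℓ)
    (U : ℕ → ℕ → ℝ)
    (hUT : ∀ s, U T s = 0)
    (hU : ∀ t, t < T → ∀ s, U t s =
      ∑ ℓ ∈ Finset.Icc 1 L, P ℓ *
        (max 0 (𝒱.sup' h𝒱ne fun μ =>
            q μ s ℓ * (μ + U (t + 1) (s + ℓ - 1) - U (t + 1) (s - 1)))
          + U (t + 1) (s - 1))) :
    ∀ t, t ≤ T → ∀ s : ℕ, U t (s + 1) ≤ U t s :=
  stmt_6_general T L P hPnn 𝒱 h𝒱ne q hq01 hqs U hUT hU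
end

section
/- Assume additionally that q(μ,s,ℓ) > 0 for all μ ∈ 𝒱, s, ℓ, and that Assumption 1 holds. Fix t < T, a state s, and a length ℓ < 𝕃, and set Δ_ℓ := U*(t+1, s+ℓ−1) − U*(t+1, s∸1) and Δ_{ℓ+1} := U*(t+1, s+ℓ) − U*(t+1, s∸1). If μ₀ ∈ 𝒱 maximizes μ ↦ q(μ,s,ℓ)·(μ + Δ_ℓ) over 𝒱, then for every μ ∈ 𝒱 with μ ≤ μ₀: max(0, q(μ,s,ℓ+1)·(μ + Δ_{ℓ+1})) ≤ max(0, q(μ₀,s,ℓ+1)·(μ₀ + Δ_{ℓ+1})). In particular, any price below an optimal price for length ℓ is weakly dominated as a price for length ℓ+1. -/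
/-!
Writing `Δ_ℓ = U*(t+1, s+ℓ-1) - U*(t+1, s∸1)`, two facts combine. First, `U*` is nonincreasing in
the state (by backward induction: each Bellman summand `max 0 (q (μ + A - B)) + B` is monotone in
`A`, `B` and `q`), so `Δ_{ℓ+1} ≤ Δ_ℓ`. Second, Assumption 1 says that raising the price from `μ` to
`μ₀` costs relatively less acceptance probability for length `ℓ+1` than for length `ℓ`; so the
optimality of `μ₀` against `μ` for length `ℓ` persists for length `ℓ+1` at the same offset `Δ_ℓ`,
and lowering the offset to `Δ_{ℓ+1}` hurts the cheaper price `μ` more, since it is accepted more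
often.
-/

open Finset

lemma mul_le_max_zero_mul {q q' y : ℝ} (hq' : 0 ≤ q') (hqq : q' ≤ q) :
    q' * y ≤ max 0 (q * y) := by
  rcases le_total 0 y with hy | hy
  · exact (mul_le_mul_of_nonneg_right hqq hy).trans (le_max_right _ _)
  · exact (mul_nonpos_of_nonneg_of_nonpos hq' hy).trans (le_max_left _ _)

lemma max_zero_mul_add_le {q q' x A A' B B' : ℝ} (hq' : 0 ≤ q') (hqq : q' ≤ q) (hq : q ≤ 1)
    (hA : A' ≤ A) (hB : B' ≤ B) :
    max 0 (q' * (x + A' - B')) + B' ≤ max 0 (q * (x + A - B)) + B := by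
  have h1q' : 0 ≤ 1 - q' := by linarith
  rw [← max_add_add_right, zero_add]
  refine max_le (by linarith [le_max_left 0 (q * (x + A - B))]) ?_
  calc q' * (x + A' - B') + B' = q' * (x + A') + (1 - q') * B' := by ring
    _ ≤ q' * (x + A) + (1 - q') * B := by gcongr
    _ = q' * (x + A - B) + B := by ring
    _ ≤ max 0 (q * (x + A - B)) + B := by gcongr; exact mul_le_max_zero_mul hq' hqq

lemma max_zero_sup'_add_le {ι : Type*} {S : Finset ι} (hS : S.Nonempty) {g g' : ι → ℝ}
    {B B' : ℝ} (h : ∀ i ∈ S, max 0 (g' i) + B' ≤ max 0 (g i) + B) :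
    max 0 (S.sup' hS g') + B' ≤ max 0 (S.sup' hS g) + B := by
  have h_le (i) (hi : i ∈ S) : max 0 (g' i) + B' ≤ max 0 (S.sup' hS g) + B :=
    (h i hi).trans (by gcongr; exact le_sup' g hi)
  rw [← le_sub_iff_add_le]
  obtain ⟨i, hi⟩ := hS
  refine max_le ?_ (sup'_le _ _ fun j hj => ?_)
  · linarith [le_max_left 0 (g' i), h_le i hi]
  · linarith [le_max_right 0 (g' j), h_le j hj]

section ValueFunction

variable {L T : ℕ} {P : ℕ → ℝ} {𝒱 : Finset ℝ} {q : ℝ → ℕ → ℕ → ℝ}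
  {U : ℕ → ℕ → ℝ}

lemma bellman_antitone (h𝒱ne : 𝒱.Nonempty) (hPnn : ∀ ℓ, 0 ≤ P ℓ) (hq01 : ∀ μ s ℓ, 0 ≤ q μ s ℓ ∧ q μ s ℓ ≤ 1)
    (hqs : ∀ μ s s' ℓ, s ≤ s' → q μ s' ℓ ≤ q μ s ℓ) {W : ℕ → ℝ} (hW : Antitone W) :
    Antitone fun s => ∑ ℓ ∈ Icc 1 L, P ℓ *
      (max 0 (𝒱.sup' h𝒱ne fun μ => q μ s ℓ * (μ + W (s + ℓ - 1) - W (s - 1))) + W (s - 1)) := by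
  intro s₁ s₂ hs
  refine sum_le_sum fun ℓ _ => mul_le_mul_of_nonneg_left ?_ (hPnn ℓ)
  exact max_zero_sup'_add_le h𝒱ne fun μ _ => max_zero_mul_add_le (hq01 μ s₂ ℓ).1
    (hqs μ s₁ s₂ ℓ hs) (hq01 μ s₁ ℓ).2 (hW (by omega)) (hW (by omega))

lemma valueFunction_antitone (h𝒱ne : 𝒱.Nonempty) (hPnn : ∀ ℓ, 0 ≤ P ℓ)
    (hq01 : ∀ μ s ℓ, 0 ≤ q μ s ℓ ∧ q μ s ℓ ≤ 1)
    (hqs : ∀ μ s s' ℓ, s ≤ s' → q μ s' ℓ ≤ q μ s ℓ) (hUT : ∀ s, U T s = 0)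
    (hU : ∀ t, t < T → ∀ s, U t s =
      ∑ ℓ ∈ Icc 1 L, P ℓ *
        (max 0 (𝒱.sup' h𝒱ne fun μ =>
            q μ s ℓ * (μ + U (t + 1) (s + ℓ - 1) - U (t + 1) (s - 1)))
          + U (t + 1) (s - 1)))
    {t : ℕ} (ht : t ≤ T) : Antitone (U t) := by
  induction ht using Nat.decreasingInduction with
  | self => intro s₁ s₂ _; rw [hUT, hUT]
  | of_succ t ht ih =>
    intro s₁ s₂ hs
    rw [hU t ht s₁, hU t ht s₂]
    exact bellman_antitone h𝒱ne hPnn hq01 hqs ih hs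

end ValueFunction

lemma mul_le_mul_of_cross_mul_le {a a' b b' x y : ℝ} (ha : 0 < a) (ha' : 0 ≤ a') (hy : 0 ≤ y)
    (hratio : b * a' ≤ b' * a) (hxy : a * x ≤ b * y) : a' * x ≤ b' * y := by
  refine le_of_mul_le_mul_left ?_ ha
  calc a * (a' * x) = a' * (a * x) := by ring
    _ ≤ a' * (b * y) := mul_le_mul_of_nonneg_left hxy ha'
    _ = (b * a') * y := by ring
    _ ≤ (b' * a) * y := mul_le_mul_of_nonneg_right hratio hy
    _ = a * (b' * y) := by ring

/-- `a, b` are the acceptance probabilities of the prices `μ ≤ μ₀`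
for length `ℓ`, and `a', b'` those for length `ℓ + 1`. -/
lemma max_zero_mul_le_of_ratio_le {a a' b b' μ μ₀ Δ Δ' : ℝ} (ha : 0 < a) (ha' : 0 ≤ a')
    (hb' : b' ≤ a') (hratio : b * a' ≤ b' * a) (hopt : a * (μ + Δ) ≤ b * (μ₀ + Δ))
    (hμ : μ ≤ μ₀) (hΔ : Δ' ≤ Δ) :
    max 0 (a' * (μ + Δ')) ≤ max 0 (b' * (μ₀ + Δ')) := by
  refine max_le (le_max_left _ _) ?_
  rcases le_total (μ + Δ') 0 with hneg | hpos
  · exact (mul_nonpos_of_nonneg_of_nonpos ha' hneg).trans (le_max_left _ _)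
  refine le_trans ?_ (le_max_right _ _)
  have hshift : a' * (μ + Δ) ≤ b' * (μ₀ + Δ) :=
    mul_le_mul_of_cross_mul_le ha ha' (by linarith) hratio hopt
  nlinarith [mul_le_mul_of_nonneg_right hb' (sub_nonneg.2 hΔ)]

theorem stmt_7_general
    (T L : ℕ)
    (P : ℕ → ℝ) (hPnn : ∀ ℓ, 0 ≤ P ℓ)
    (𝒱 : Finset ℝ) (h𝒱ne : 𝒱.Nonempty)
    (q : ℝ → ℕ → ℕ → ℝ)
    (hq01 : ∀ μ s ℓ, 0 ≤ q μ s ℓ ∧ q μ s ℓ ≤ 1)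
    (hqμ : ∀ μ μ' s ℓ, μ ≤ μ' → q μ' s ℓ ≤ q μ s ℓ)
    (hqs : ∀ μ s s' ℓ, s ≤ s' → q μ s' ℓ ≤ q μ s ℓ)
    (hqpos : ∀ μ ∈ 𝒱, ∀ s ℓ : ℕ, 1 ≤ ℓ → ℓ ≤ L → 0 < q μ s ℓ)
    (hA1 : ∀ μ ∈ 𝒱, ∀ μ' ∈ 𝒱, μ ≤ μ' → ∀ s ℓ : ℕ, 1 ≤ ℓ → ℓ < L →
      q μ' s ℓ * q μ s (ℓ + 1) ≤ q μ' s (ℓ + 1) * q μ s ℓ)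
    (U : ℕ → ℕ → ℝ)
    (hUT : ∀ s, U T s = 0)
    (hU : ∀ t, t < T → ∀ s, U t s =
      ∑ ℓ ∈ Finset.Icc 1 L, P ℓ *
        (max 0 (𝒱.sup' h𝒱ne fun μ =>
            q μ s ℓ * (μ + U (t + 1) (s + ℓ - 1) - U (t + 1) (s - 1)))
          + U (t + 1) (s - 1)))
    (t : ℕ) (ht : t < T) (s ℓ : ℕ) (hℓ1 : 1 ≤ ℓ) (hℓL : ℓ < L)
    (μ₀ : ℝ) (hμ₀ : μ₀ ∈ 𝒱)
    (hopt : ∀ μ ∈ 𝒱,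
      q μ s ℓ * (μ + (U (t + 1) (s + ℓ - 1) - U (t + 1) (s - 1))) ≤
        q μ₀ s ℓ * (μ₀ + (U (t + 1) (s + ℓ - 1) - U (t + 1) (s - 1)))) :
    ∀ μ ∈ 𝒱, μ ≤ μ₀ →
      max 0 (q μ s (ℓ + 1) * (μ + (U (t + 1) (s + ℓ) - U (t + 1) (s - 1)))) ≤
        max 0 (q μ₀ s (ℓ + 1) * (μ₀ + (U (t + 1) (s + ℓ) - U (t + 1) (s - 1)))) := by
  intro μ hμ hμμ₀
  have hU_anti : Antitone (U (t + 1)) := valueFunction_antitone h𝒱ne hPnn hq01 hqs hUT hU ht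
  have hΔ : U (t + 1) (s + ℓ) ≤ U (t + 1) (s + ℓ - 1) := hU_anti (by omega)
  exact max_zero_mul_le_of_ratio_le (hqpos μ hμ s ℓ hℓ1 hℓL.le) (hq01 μ s (ℓ + 1)).1
    (hqμ μ μ₀ s (ℓ + 1) hμμ₀) (hA1 μ hμ μ₀ hμ₀ hμμ₀ s ℓ hℓ1 hℓL) (hopt μ hμ) hμμ₀
    (by linarith)

/-- Under positivity of the acceptance probabilities and Assumption 1, any
price `μ ≤ μ₀` below an optimal price `μ₀` for length `ℓ` is weakly dominated by `μ₀` as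
a price for length `ℓ+1`. -/
theorem stmt_7
    (T L : ℕ) (hL : 1 ≤ L)
    (P : ℕ → ℝ) (hPnn : ∀ ℓ, 0 ≤ P ℓ)
    (hPsum : ∑ ℓ ∈ Finset.Icc 1 L, P ℓ = 1)
    (V : ℝ) (hV : 0 < V)
    (𝒱 : Finset ℝ) (h𝒱ne : 𝒱.Nonempty) (h𝒱 : ∀ μ ∈ 𝒱, 0 ≤ μ ∧ μ ≤ V)
    (q : ℝ → ℕ → ℕ → ℝ)
    (hq01 : ∀ μ s ℓ, 0 ≤ q μ s ℓ ∧ q μ s ℓ ≤ 1)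
    (hqμ : ∀ μ μ' s ℓ, μ ≤ μ' → q μ' s ℓ ≤ q μ s ℓ)
    (hqs : ∀ μ s s' ℓ, s ≤ s' → q μ s' ℓ ≤ q μ s ℓ)
    (hqpos : ∀ μ ∈ 𝒱, ∀ s ℓ : ℕ, 1 ≤ ℓ → ℓ ≤ L → 0 < q μ s ℓ)
    (hA1 : ∀ μ ∈ 𝒱, ∀ μ' ∈ 𝒱, μ ≤ μ' → ∀ s ℓ : ℕ, 1 ≤ ℓ → ℓ < L →
      q μ' s ℓ * q μ s (ℓ + 1) ≤ q μ' s (ℓ + 1) * q μ s ℓ)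
    (U : ℕ → ℕ → ℝ)
    (hUT : ∀ s, U T s = 0)
    (hU : ∀ t, t < T → ∀ s, U t s =
      ∑ ℓ ∈ Finset.Icc 1 L, P ℓ *
        (max 0 (𝒱.sup' h𝒱ne fun μ =>
            q μ s ℓ * (μ + U (t + 1) (s + ℓ - 1) - U (t + 1) (s - 1)))
          + U (t + 1) (s - 1)))
    (t : ℕ) (ht : t < T) (s ℓ : ℕ) (hℓ1 : 1 ≤ ℓ) (hℓL : ℓ < L)
    (μ₀ : ℝ) (hμ₀ : μ₀ ∈ 𝒱)
    (hopt : ∀ μ ∈ 𝒱,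
      q μ s ℓ * (μ + (U (t + 1) (s + ℓ - 1) - U (t + 1) (s - 1))) ≤
        q μ₀ s ℓ * (μ₀ + (U (t + 1) (s + ℓ - 1) - U (t + 1) (s - 1)))) :
    ∀ μ ∈ 𝒱, μ ≤ μ₀ →
      max 0 (q μ s (ℓ + 1) * (μ + (U (t + 1) (s + ℓ) - U (t + 1) (s - 1)))) ≤
        max 0 (q μ₀ s (ℓ + 1) * (μ₀ + (U (t + 1) (s + ℓ) - U (t + 1) (s - 1)))) :=
  stmt_7_general T L P hPnn 𝒱 h𝒱ne q hq01 hqμ hqs hqpos hA1 U hUT hU t ht s ℓ hℓ1 hℓL μ₀ hμ₀ hopt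
end

section
/- Suppose |G(ℓ,μ,s) − Ĝ(ℓ,μ,s)| ≤ ε and |P(ℓ) − P̂(ℓ)| ≤ ε for all lengths ℓ, prices μ ∈ 𝒱 and states s. Then the corresponding optimal value functions satisfy |U*(t,s) − Û*(t,s)| ≤ 2·(T−t)·𝕍·𝕃·ε for every t ∈ {0,…,T} and state s ∈ ℕ. -/
/-!
Both value functions are nonincreasing in the state `s`, because `G` is nonincreasing in `s`
and `G ≤ P`. Consequently the gain `μ + U*(t+1, s+ℓ-1) - U*(t+1, s∸1)` of an accepted request
is at most `μ ≤ 𝕍`, so exchanging `G` for `Ĝ` costs at most `ε𝕍` per length `ℓ`, while the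
errors of the continuation values enter with total weight `∑ P̂(ℓ) = 1`. The terms
`(P(ℓ) - P̂(ℓ)) U*(t+1, s∸1)` cancel in the sum since `P` and `P̂` both sum to `1`. Each step of
the recursion thus adds at most `𝕃𝕍ε`.
-/

open Finset

namespace PricingDP

lemma mul_le_max_zero_mul_add_mul_of_le {g g' p c c' δ : ℝ} (hg' : 0 ≤ g') (hg'g : g' ≤ g)
    (hgp : g ≤ p) (hc' : c' ≤ c + δ) (hδ : 0 ≤ δ) :
    g' * c' ≤ max 0 (g * c) + p * δ := by
  rcases le_or_gt c' 0 with hc'0 | hc'0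
  · have : 0 ≤ p * δ := mul_nonneg (by linarith) hδ
    nlinarith [le_max_left 0 (g * c)]
  · calc g' * c' ≤ g * (c + δ) := mul_le_mul hg'g hc' hc'0.le (by linarith)
      _ = g * c + g * δ := by ring
      _ ≤ max 0 (g * c) + p * δ := add_le_add (le_max_right _ _) (by gcongr)

lemma mul_le_max_zero_mul_add_of_sub_le {g g' p' c c' δ ε V : ℝ} (hg : 0 ≤ g) (hg' : 0 ≤ g')
    (hg'p' : g' ≤ p') (hgg' : g - g' ≤ ε) (hcV : c ≤ V) (hc : c ≤ c' + δ) (hδ : 0 ≤ δ)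
    (hε : 0 ≤ ε) (hV : 0 ≤ V) :
    g * c ≤ max 0 (g' * c') + (ε * V + p' * δ) := by
  rcases le_or_gt c 0 with hc0 | hc0
  · have : 0 ≤ p' * δ := mul_nonneg (by linarith) hδ
    nlinarith [le_max_left 0 (g' * c'), mul_nonneg hε hV]
  · calc g * c = (g - g') * c + g' * c := by ring
      _ ≤ ε * V + g' * (c' + δ) := add_le_add (mul_le_mul hgg' hcV hc0.le hε) (by gcongr)
      _ = g' * c' + ε * V + g' * δ := by ring
      _ ≤ max 0 (g' * c') + (ε * V + p' * δ) := by
        rw [← add_assoc]; gcongr; exact le_max_right _ _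

lemma max_zero_sup'_le_add {ι : Type*} {s : Finset ι} (hs : s.Nonempty) {f f' : ι → ℝ} {K : ℝ}
    (hK : 0 ≤ K) (h : ∀ i ∈ s, f i ≤ max 0 (f' i) + K) :
    max 0 (s.sup' hs f) ≤ max 0 (s.sup' hs f') + K :=
  max_le (add_nonneg (le_max_left _ _) hK) <| sup'_le _ _ fun i hi =>
    (h i hi).trans <| add_le_add_left (max_le_max le_rfl (le_sup' f' hi)) K

variable {𝒱 : Finset ℝ} (h𝒱ne : 𝒱.Nonempty)

/-- The summand of length `ℓ` in the recursion, with `g μ = G(ℓ, μ, s)`, `p = P(ℓ)` and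
continuation values `v = U*(t+1, s+ℓ-1)` after acceptance and `w = U*(t+1, s∸1)`. -/
def lengthValue (g : ℝ → ℝ) (p v w : ℝ) : ℝ :=
  max 0 (𝒱.sup' h𝒱ne fun μ => g μ * (μ + v - w)) + p * w

lemma lengthValue_le_lengthValue {g g' : ℝ → ℝ} {p v v' w w' : ℝ} (hp : 0 ≤ p)
    (hg' : ∀ μ ∈ 𝒱, 0 ≤ g' μ) (hg'g : ∀ μ ∈ 𝒱, g' μ ≤ g μ) (hgp : ∀ μ ∈ 𝒱, g μ ≤ p)
    (hv : v' ≤ v) (hw : w' ≤ w) :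
    lengthValue h𝒱ne g' p v' w' ≤ lengthValue h𝒱ne g p v w := by
  have := max_zero_sup'_le_add h𝒱ne (f := fun μ => g' μ * (μ + v' - w'))
    (f' := fun μ => g μ * (μ + v - w)) (mul_nonneg hp (sub_nonneg.2 hw)) fun μ hμ =>
    mul_le_max_zero_mul_add_mul_of_le (hg' μ hμ) (hg'g μ hμ) (hgp μ hμ) (by linarith)
      (sub_nonneg.2 hw)
  unfold lengthValue
  linarith

lemma lengthValue_sub_le {g g' : ℝ → ℝ} {p p' v v' w w' ε V Δ : ℝ}
    (h𝒱V : ∀ μ ∈ 𝒱, μ ≤ V) (hε : 0 ≤ ε) (hV : 0 ≤ V) (hp' : 0 ≤ p')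
    (hg : ∀ μ ∈ 𝒱, 0 ≤ g μ) (hg' : ∀ μ ∈ 𝒱, 0 ≤ g' μ ∧ g' μ ≤ p')
    (hgg' : ∀ μ ∈ 𝒱, g μ - g' μ ≤ ε) (hvw : v ≤ w) (hv : v - v' ≤ Δ) (hw : w - w' ≤ Δ) :
    lengthValue h𝒱ne g p v w - lengthValue h𝒱ne g' p' v' w' ≤ ε * V + p' * Δ + (p - p') * w := by
  have hδ : 0 ≤ Δ - (w - w') := by linarith
  have := max_zero_sup'_le_add h𝒱ne (f := fun μ => g μ * (μ + v - w))
    (f' := fun μ => g' μ * (μ + v' - w')) (add_nonneg (mul_nonneg hε hV) (mul_nonneg hp' hδ))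
    fun μ hμ => mul_le_max_zero_mul_add_of_sub_le (hg μ hμ) (hg' μ hμ).1 (hg' μ hμ).2
      (hgg' μ hμ) (by linarith [h𝒱V μ hμ]) (by linarith) hδ hε hV
  unfold lengthValue
  linarith

def bellman (L : ℕ) (P : ℕ → ℝ) (G : ℕ → ℝ → ℕ → ℝ) (W : ℕ → ℝ) (s : ℕ) : ℝ :=
  ∑ ℓ ∈ Icc 1 L, lengthValue h𝒱ne (fun μ => G ℓ μ s) (P ℓ) (W (s + ℓ - 1)) (W (s - 1))

variable {L : ℕ} {P P' : ℕ → ℝ} {G G' : ℕ → ℝ → ℕ → ℝ}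

lemma bellman_antitone (hPnn : ∀ ℓ, 0 ≤ P ℓ)
    (hG : ∀ ℓ ∈ Icc 1 L, ∀ μ ∈ 𝒱, ∀ s : ℕ, 0 ≤ G ℓ μ s ∧ G ℓ μ s ≤ P ℓ)
    (hGs : ∀ ℓ ∈ Icc 1 L, ∀ μ : ℝ, ∀ s s' : ℕ, s ≤ s' → G ℓ μ s' ≤ G ℓ μ s)
    {W : ℕ → ℝ} (hW : Antitone W) : Antitone (bellman h𝒱ne L P G W) :=
  fun s s' hss => sum_le_sum fun ℓ hℓ =>
    lengthValue_le_lengthValue h𝒱ne (hPnn ℓ) (fun μ hμ => (hG ℓ hℓ μ hμ s').1)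
      (fun μ _ => hGs ℓ hℓ μ s s' hss) (fun μ hμ => (hG ℓ hℓ μ hμ s).2)
      (hW (by omega)) (hW (by omega))

lemma bellman_sub_le {V ε Δ : ℝ} (h𝒱V : ∀ μ ∈ 𝒱, μ ≤ V) (hε : 0 ≤ ε) (hV : 0 ≤ V)
    (hPsum : ∑ ℓ ∈ Icc 1 L, P ℓ = 1) (hP'nn : ∀ ℓ, 0 ≤ P' ℓ)
    (hP'sum : ∑ ℓ ∈ Icc 1 L, P' ℓ = 1)
    (hG : ∀ ℓ ∈ Icc 1 L, ∀ μ ∈ 𝒱, ∀ s : ℕ, 0 ≤ G ℓ μ s)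
    (hG' : ∀ ℓ ∈ Icc 1 L, ∀ μ ∈ 𝒱, ∀ s : ℕ, 0 ≤ G' ℓ μ s ∧ G' ℓ μ s ≤ P' ℓ)
    (hGG' : ∀ ℓ ∈ Icc 1 L, ∀ μ ∈ 𝒱, ∀ s : ℕ, G ℓ μ s - G' ℓ μ s ≤ ε)
    {W W' : ℕ → ℝ} (hW : Antitone W) (hWW' : ∀ k, W k - W' k ≤ Δ) (s : ℕ) :
    bellman h𝒱ne L P G W s - bellman h𝒱ne L P' G' W' s ≤ L * (ε * V) + Δ :=
  calc bellman h𝒱ne L P G W s - bellman h𝒱ne L P' G' W' s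
      = ∑ ℓ ∈ Icc 1 L,
          (lengthValue h𝒱ne (fun μ => G ℓ μ s) (P ℓ) (W (s + ℓ - 1)) (W (s - 1))
            - lengthValue h𝒱ne (fun μ => G' ℓ μ s) (P' ℓ) (W' (s + ℓ - 1)) (W' (s - 1))) :=
        (sum_sub_distrib ..).symm
    _ ≤ ∑ ℓ ∈ Icc 1 L, (ε * V + P' ℓ * Δ + (P ℓ - P' ℓ) * W (s - 1)) :=
        sum_le_sum fun ℓ hℓ => lengthValue_sub_le h𝒱ne h𝒱V hε hV (hP'nn ℓ)
          (fun μ hμ => hG ℓ hℓ μ hμ s) (fun μ hμ => hG' ℓ hℓ μ hμ s)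
          (fun μ hμ => hGG' ℓ hℓ μ hμ s) (hW (by omega)) (hWW' _) (hWW' _)
    _ = L * (ε * V) + Δ := by
        rw [sum_add_distrib, sum_add_distrib, ← sum_mul, ← sum_mul, ← sum_mul, sum_sub_distrib,
          hPsum, hP'sum]
        simp [mul_assoc]

variable {T : ℕ} {U U' : ℕ → ℕ → ℝ}

lemma valueFunction_antitone (hPnn : ∀ ℓ, 0 ≤ P ℓ)
    (hG : ∀ ℓ ∈ Icc 1 L, ∀ μ ∈ 𝒱, ∀ s : ℕ, 0 ≤ G ℓ μ s ∧ G ℓ μ s ≤ P ℓ)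
    (hGs : ∀ ℓ ∈ Icc 1 L, ∀ μ : ℝ, ∀ s s' : ℕ, s ≤ s' → G ℓ μ s' ≤ G ℓ μ s)
    (hUT : ∀ s, U T s = 0) (hU : ∀ t < T, U t = bellman h𝒱ne L P G (U (t + 1)))
    {t : ℕ} (ht : t ≤ T) : Antitone (U t) := by
  induction ht using Nat.decreasingInduction with
  | self => exact (funext hUT : U T = 0) ▸ antitone_const
  | of_succ k hk ih => rw [hU k hk]; exact bellman_antitone h𝒱ne hPnn hG hGs ih

lemma valueFunction_sub_le {V ε : ℝ} (h𝒱V : ∀ μ ∈ 𝒱, μ ≤ V) (hε : 0 ≤ ε) (hV : 0 ≤ V)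
    (hPnn : ∀ ℓ, 0 ≤ P ℓ) (hPsum : ∑ ℓ ∈ Icc 1 L, P ℓ = 1)
    (hG : ∀ ℓ ∈ Icc 1 L, ∀ μ ∈ 𝒱, ∀ s : ℕ, 0 ≤ G ℓ μ s ∧ G ℓ μ s ≤ P ℓ)
    (hGs : ∀ ℓ ∈ Icc 1 L, ∀ μ : ℝ, ∀ s s' : ℕ, s ≤ s' → G ℓ μ s' ≤ G ℓ μ s)
    (hP'nn : ∀ ℓ, 0 ≤ P' ℓ) (hP'sum : ∑ ℓ ∈ Icc 1 L, P' ℓ = 1)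
    (hG' : ∀ ℓ ∈ Icc 1 L, ∀ μ ∈ 𝒱, ∀ s : ℕ, 0 ≤ G' ℓ μ s ∧ G' ℓ μ s ≤ P' ℓ)
    (hGG' : ∀ ℓ ∈ Icc 1 L, ∀ μ ∈ 𝒱, ∀ s : ℕ, G ℓ μ s - G' ℓ μ s ≤ ε)
    (hUT : ∀ s, U T s = 0) (hU : ∀ t < T, U t = bellman h𝒱ne L P G (U (t + 1)))
    (hU'T : ∀ s, U' T s = 0) (hU' : ∀ t < T, U' t = bellman h𝒱ne L P' G' (U' (t + 1)))
    {t : ℕ} (ht : t ≤ T) (s : ℕ) :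
    U t s - U' t s ≤ (T - t : ℕ) * (L * (ε * V)) := by
  induction ht using Nat.decreasingInduction generalizing s with
  | self => simp [hUT, hU'T]
  | of_succ k hk ih =>
    rw [hU k hk, hU' k hk, show T - k = T - (k + 1) + 1 by omega, Nat.cast_succ]
    refine (bellman_sub_le h𝒱ne h𝒱V hε hV hPsum hP'nn hP'sum (fun ℓ hℓ μ hμ s => (hG ℓ hℓ μ hμ s).1)
      hG' hGG' (valueFunction_antitone h𝒱ne hPnn hG hGs hUT hU hk) ih s).trans_eq ?_
    ring

end PricingDP

theorem stmt_11_general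
    (T L : ℕ) (V : ℝ) (hV : 0 < V)
    (𝒱 : Finset ℝ) (h𝒱ne : 𝒱.Nonempty) (h𝒱 : ∀ μ ∈ 𝒱, 0 ≤ μ ∧ μ ≤ V)
    (ε : ℝ) (hε : 0 ≤ ε)
    -- the true model (P, G)
    (P : ℕ → ℝ) (G : ℕ → ℝ → ℕ → ℝ)
    (hPnn : ∀ ℓ, 0 ≤ P ℓ) (hPsum : ∑ ℓ ∈ Finset.Icc 1 L, P ℓ = 1)
    (hG : ∀ ℓ ∈ Finset.Icc 1 L, ∀ μ ∈ 𝒱, ∀ s : ℕ, 0 ≤ G ℓ μ s ∧ G ℓ μ s ≤ P ℓ)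
    (hGs : ∀ ℓ ∈ Finset.Icc 1 L, ∀ μ : ℝ, ∀ s s' : ℕ, s ≤ s' → G ℓ μ s' ≤ G ℓ μ s)
    -- the estimated model (P̂, Ĝ)
    (P' : ℕ → ℝ) (G' : ℕ → ℝ → ℕ → ℝ)
    (hP'nn : ∀ ℓ, 0 ≤ P' ℓ) (hP'sum : ∑ ℓ ∈ Finset.Icc 1 L, P' ℓ = 1)
    (hG' : ∀ ℓ ∈ Finset.Icc 1 L, ∀ μ ∈ 𝒱, ∀ s : ℕ, 0 ≤ G' ℓ μ s ∧ G' ℓ μ s ≤ P' ℓ)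
    (hG's : ∀ ℓ ∈ Finset.Icc 1 L, ∀ μ : ℝ, ∀ s s' : ℕ, s ≤ s' → G' ℓ μ s' ≤ G' ℓ μ s)
    -- ε-closeness
    (hGclose : ∀ ℓ ∈ Finset.Icc 1 L, ∀ μ ∈ 𝒱, ∀ s : ℕ, |G ℓ μ s - G' ℓ μ s| ≤ ε)
    -- the two optimal value functions
    (U U' : ℕ → ℕ → ℝ)
    (hUT : ∀ s, U T s = 0)
    (hU : ∀ t, t < T → ∀ s, U t s =
      ∑ ℓ ∈ Finset.Icc 1 L,
        (max 0 (𝒱.sup' h𝒱ne fun μ =>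
            G ℓ μ s * (μ + U (t + 1) (s + ℓ - 1) - U (t + 1) (s - 1)))
          + P ℓ * U (t + 1) (s - 1)))
    (hU'T : ∀ s, U' T s = 0)
    (hU' : ∀ t, t < T → ∀ s, U' t s =
      ∑ ℓ ∈ Finset.Icc 1 L,
        (max 0 (𝒱.sup' h𝒱ne fun μ =>
            G' ℓ μ s * (μ + U' (t + 1) (s + ℓ - 1) - U' (t + 1) (s - 1)))
          + P' ℓ * U' (t + 1) (s - 1))) :
    ∀ t, t ≤ T → ∀ s : ℕ, |U t s - U' t s| ≤ 2 * ((T - t : ℕ) : ℝ) * V * L * ε := by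
  intro t ht s
  have h𝒱V μ hμ : μ ≤ V := (h𝒱 μ hμ).2
  have hUb : ∀ t < T, U t = PricingDP.bellman h𝒱ne L P G (U (t + 1)) := fun t ht => funext (hU t ht)
  have hU'b : ∀ t < T, U' t =
      PricingDP.bellman h𝒱ne L P' G' (U' (t + 1)) := fun t ht => funext (hU' t ht)
  have hGG' ℓ hℓ μ hμ s := (abs_sub_le_iff.1 (hGclose ℓ hℓ μ hμ s)).1
  have hG'G ℓ hℓ μ hμ s := (abs_sub_le_iff.1 (hGclose ℓ hℓ μ hμ s)).2
  have h₁ := PricingDP.valueFunction_sub_le h𝒱ne h𝒱V hε hV.le hPnn hPsum hG hGs hP'nn hP'sum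
    hG' hGG' hUT hUb hU'T hU'b ht s
  have h₂ := PricingDP.valueFunction_sub_le h𝒱ne h𝒱V hε hV.le hP'nn hP'sum hG' hG's hPnn hPsum
    hG hG'G hU'T hU'b hUT hUb ht s
  have hbound : ((T - t : ℕ) : ℝ) * (L * (ε * V)) ≤ 2 * ((T - t : ℕ) : ℝ) * V * L * ε := by
    have : 0 ≤ ((T - t : ℕ) : ℝ) * (L * (ε * V)) := by positivity
    linarith
  exact abs_sub_le_iff.2 ⟨h₁.trans hbound, h₂.trans hbound⟩

/-- Finite-horizon robustness: if two models `(P,G)` and `(P̂,Ĝ)` are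
ε-close, their optimal value functions satisfy `|U*(t,s) − Û*(t,s)| ≤ 2(T−t)𝕍𝕃ε`. -/
theorem stmt_11
    (T L : ℕ) (hL : 1 ≤ L) (V : ℝ) (hV : 0 < V)
    (𝒱 : Finset ℝ) (h𝒱ne : 𝒱.Nonempty) (h𝒱 : ∀ μ ∈ 𝒱, 0 ≤ μ ∧ μ ≤ V)
    (ε : ℝ) (hε : 0 ≤ ε)
    -- the true model (P, G)
    (P : ℕ → ℝ) (G : ℕ → ℝ → ℕ → ℝ)
    (hPnn : ∀ ℓ, 0 ≤ P ℓ) (hPsum : ∑ ℓ ∈ Finset.Icc 1 L, P ℓ = 1)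
    (hG : ∀ ℓ ∈ Finset.Icc 1 L, ∀ μ ∈ 𝒱, ∀ s : ℕ, 0 ≤ G ℓ μ s ∧ G ℓ μ s ≤ P ℓ)
    (hGμ : ∀ ℓ ∈ Finset.Icc 1 L, ∀ μ μ' : ℝ, ∀ s : ℕ, μ ≤ μ' → G ℓ μ' s ≤ G ℓ μ s)
    (hGs : ∀ ℓ ∈ Finset.Icc 1 L, ∀ μ : ℝ, ∀ s s' : ℕ, s ≤ s' → G ℓ μ s' ≤ G ℓ μ s)
    -- the estimated model (P̂, Ĝ)
    (P' : ℕ → ℝ) (G' : ℕ → ℝ → ℕ → ℝ)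
    (hP'nn : ∀ ℓ, 0 ≤ P' ℓ) (hP'sum : ∑ ℓ ∈ Finset.Icc 1 L, P' ℓ = 1)
    (hG' : ∀ ℓ ∈ Finset.Icc 1 L, ∀ μ ∈ 𝒱, ∀ s : ℕ, 0 ≤ G' ℓ μ s ∧ G' ℓ μ s ≤ P' ℓ)
    (hG'μ : ∀ ℓ ∈ Finset.Icc 1 L, ∀ μ μ' : ℝ, ∀ s : ℕ, μ ≤ μ' → G' ℓ μ' s ≤ G' ℓ μ s)
    (hG's : ∀ ℓ ∈ Finset.Icc 1 L, ∀ μ : ℝ, ∀ s s' : ℕ, s ≤ s' → G' ℓ μ s' ≤ G' ℓ μ s)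
    -- ε-closeness
    (hGclose : ∀ ℓ ∈ Finset.Icc 1 L, ∀ μ ∈ 𝒱, ∀ s : ℕ, |G ℓ μ s - G' ℓ μ s| ≤ ε)
    (hPclose : ∀ ℓ ∈ Finset.Icc 1 L, |P ℓ - P' ℓ| ≤ ε)
    -- the two optimal value functions
    (U U' : ℕ → ℕ → ℝ)
    (hUT : ∀ s, U T s = 0)
    (hU : ∀ t, t < T → ∀ s, U t s =
      ∑ ℓ ∈ Finset.Icc 1 L,
        (max 0 (𝒱.sup' h𝒱ne fun μ =>
            G ℓ μ s * (μ + U (t + 1) (s + ℓ - 1) - U (t + 1) (s - 1)))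
          + P ℓ * U (t + 1) (s - 1)))
    (hU'T : ∀ s, U' T s = 0)
    (hU' : ∀ t, t < T → ∀ s, U' t s =
      ∑ ℓ ∈ Finset.Icc 1 L,
        (max 0 (𝒱.sup' h𝒱ne fun μ =>
            G' ℓ μ s * (μ + U' (t + 1) (s + ℓ - 1) - U' (t + 1) (s - 1)))
          + P' ℓ * U' (t + 1) (s - 1))) :
    ∀ t, t ≤ T → ∀ s : ℕ, |U t s - U' t s| ≤ 2 * ((T - t : ℕ) : ℝ) * V * L * ε :=
  stmt_11_general T L V hV 𝒱 h𝒱ne h𝒱 ε hε P G hPnn hPsum hG hGs P' G' hP'nn hP'sum hG' hG's hGclose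
    U U' hUT hU hU'T hU'
end

section
/- Fix a discount factor γ ∈ (0,1), and suppose |G(ℓ,μ,s) − Ĝ(ℓ,μ,s)| ≤ ε and |P(ℓ) − P̂(ℓ)| ≤ ε for all lengths ℓ, prices μ ∈ 𝒱 and states s. Let U*_γ and Û*_γ be functions ℕ → ℝ with values in [0, 𝕍/(1−γ)] satisfying the discounted Bellman fixed-point equations of the two models. Then |U*_γ(s) − Û*_γ(s)| ≤ 2·𝕍·𝕃·ε/(1−γ) for every state s ∈ ℕ. -/
/-!
Compare the two Bellman operators summand by summand at the price `μ` maximising the first one.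
The gain `μ + γ U(s + ℓ - 1) - γ U(s ∸ 1)` then lies in `[0, 𝕍]` because `U` is antitone, so
replacing `G` by `Ĝ` costs at most `ε 𝕍` per length, while the value differences enter with the
weights `Ĝ(ℓ, μ, s)` and `P̂(ℓ) - Ĝ(ℓ, μ, s)`, which add up to `P̂(ℓ)`; the remaining terms
`(P(ℓ) - P̂(ℓ)) γ U(s ∸ 1)` cancel since both `P` and `P̂` sum to one. Hence
`sup (U - Û) ≤ 𝕃 ε 𝕍 + γ sup (U - Û)`. The same comparison between two states of one model
gives `sup_{b ≤ a} (U a - U b) ≤ γ sup_{b ≤ a} (U a - U b)`, i.e. antitonicity of `U`.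
-/

open Finset

/-- The summand of length `ℓ` in the Bellman operator, with `p = P(ℓ)`, `g μ = G(ℓ, μ, s)`,
continuation value `x = U(s + ℓ - 1)` after a sale and `y = U(s ∸ 1)` otherwise. -/
def bellmanSummand (𝒱 : Finset ℝ) (h𝒱 : 𝒱.Nonempty) (γ p : ℝ) (g : ℝ → ℝ) (x y : ℝ) : ℝ :=
  max 0 (𝒱.sup' h𝒱 fun μ => g μ * (μ + γ * x - γ * y)) + p * (γ * y)

def IsBellmanFixedPoint (L : ℕ) (𝒱 : Finset ℝ) (h𝒱 : 𝒱.Nonempty) (γ : ℝ) (P : ℕ → ℝ)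
    (G : ℕ → ℝ → ℕ → ℝ) (U : ℕ → ℝ) : Prop :=
  ∀ s, U s = ∑ ℓ ∈ Icc 1 L,
    bellmanSummand 𝒱 h𝒱 γ (P ℓ) (fun μ => G ℓ μ s) (U (s + ℓ - 1)) (U (s - 1))

theorem le_div_one_sub_of_forall_le_imp {ι : Type*} {f : ι → ℝ} {c γ : ℝ}
    (hf : BddAbove (Set.range f)) (hγ : γ < 1)
    (h : ∀ K, (∀ i, f i ≤ K) → ∀ i, f i ≤ c + γ * K) (i : ι) : f i ≤ c / (1 - γ) := by
  have : Nonempty ι := ⟨i⟩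
  have hsup : ⨆ j, f j ≤ c + γ * ⨆ j, f j := ciSup_le (h _ (le_ciSup hf))
  rw [le_div_iff₀ (by linarith)]
  nlinarith [le_ciSup hf i]

theorem bddAbove_range_sub_comp {ι α : Type*} {f g : α → ℝ} (hf : BddAbove (Set.range f))
    (hg : BddBelow (Set.range g)) (a b : ι → α) :
    BddAbove (Set.range fun i => f (a i) - g (b i)) := by
  obtain ⟨A, hA⟩ := hf
  obtain ⟨B, hB⟩ := hg
  exact ⟨A - B, Set.forall_mem_range.2 fun i =>
    sub_le_sub (hA (Set.mem_range_self _)) (hB (Set.mem_range_self _))⟩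

theorem bellmanSummand_sub_le {𝒱 : Finset ℝ} (h𝒱 : 𝒱.Nonempty) {γ p p' c K x x' y y' : ℝ}
    {g g' : ℝ → ℝ} (hγ : 0 ≤ γ) (hc : 0 ≤ c) (hg : ∀ μ ∈ 𝒱, 0 ≤ g μ)
    (hg' : ∀ μ ∈ 𝒱, 0 ≤ g' μ ∧ g' μ ≤ p') (hx : x - x' ≤ K) (hy : y - y' ≤ K)
    (hgg' : ∀ μ ∈ 𝒱, 0 ≤ μ + γ * x - γ * y → (g μ - g' μ) * (μ + γ * x - γ * y) ≤ c) :
    bellmanSummand 𝒱 h𝒱 γ p g x y - bellmanSummand 𝒱 h𝒱 γ p' g' x' y'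
      ≤ c + γ * (p' * K) + γ * ((p - p') * y) := by
  have hp' : 0 ≤ p' :=
    let ⟨μ₀, hμ₀⟩ := h𝒱; (hg' μ₀ hμ₀).1.trans (hg' μ₀ hμ₀).2
  have hstay : p' * (γ * (y - y')) ≤ p' * (γ * K) :=
    mul_le_mul_of_nonneg_left (mul_le_mul_of_nonneg_left hy hγ) hp'
  unfold bellmanSummand
  have hmax' := le_max_left 0 (𝒱.sup' h𝒱 fun μ => g' μ * (μ + γ * x' - γ * y'))
  obtain ⟨μ, hμ, hμmax⟩ := exists_mem_eq_sup' h𝒱 fun μ => g μ * (μ + γ * x - γ * y)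
  rcases le_or_gt (g μ * (μ + γ * x - γ * y)) 0 with hneg | hpos
  · rw [hμmax, max_eq_left hneg]
    linarith
  · have hz : 0 ≤ μ + γ * x - γ * y := (pos_of_mul_pos_right hpos (hg μ hμ)).le
    have hsale : g' μ * (γ * (x - x')) ≤ g' μ * (γ * K) :=
      mul_le_mul_of_nonneg_left (mul_le_mul_of_nonneg_left hx hγ) (hg' μ hμ).1
    have hnosale : (p' - g' μ) * (γ * (y - y')) ≤ (p' - g' μ) * (γ * K) :=
      mul_le_mul_of_nonneg_left (mul_le_mul_of_nonneg_left hy hγ) (sub_nonneg.2 (hg' μ hμ).2)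
    have hmax'μ : g' μ * (μ + γ * x' - γ * y')
        ≤ max 0 (𝒱.sup' h𝒱 fun μ => g' μ * (μ + γ * x' - γ * y')) :=
      (le_sup' (fun μ => g' μ * (μ + γ * x' - γ * y')) hμ).trans (le_max_right _ _)
    rw [hμmax, max_eq_right hpos.le]
    linarith [hgg' μ hμ hz]

theorem sum_bellmanSummand_sub_le {ι : Type*} (S : Finset ι) {𝒱 : Finset ℝ} (h𝒱 : 𝒱.Nonempty)
    {γ c K y y' : ℝ} {p p' x x' : ι → ℝ} {g g' : ι → ℝ → ℝ} (hγ : 0 ≤ γ) (hc : 0 ≤ c)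
    (hp : ∑ i ∈ S, p i = ∑ i ∈ S, p' i) (hp' : ∑ i ∈ S, p' i = 1)
    (hg : ∀ i ∈ S, ∀ μ ∈ 𝒱, 0 ≤ g i μ) (hg' : ∀ i ∈ S, ∀ μ ∈ 𝒱, 0 ≤ g' i μ ∧ g' i μ ≤ p' i)
    (hx : ∀ i ∈ S, x i - x' i ≤ K) (hy : y - y' ≤ K)
    (hgg' : ∀ i ∈ S, ∀ μ ∈ 𝒱, 0 ≤ μ + γ * x i - γ * y →
      (g i μ - g' i μ) * (μ + γ * x i - γ * y) ≤ c) :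
    ∑ i ∈ S, bellmanSummand 𝒱 h𝒱 γ (p i) (g i) (x i) y
      - ∑ i ∈ S, bellmanSummand 𝒱 h𝒱 γ (p' i) (g' i) (x' i) y' ≤ #S * c + γ * K := by
  rw [← sum_sub_distrib]
  calc _ ≤ ∑ i ∈ S, (c + γ * (p' i * K) + γ * ((p i - p' i) * y)) :=
        sum_le_sum fun i hi => bellmanSummand_sub_le h𝒱 hγ hc (hg i hi) (hg' i hi) (hx i hi) hy
          (hgg' i hi)
    _ = #S * c + γ * K := by
        simp only [sum_add_distrib, ← mul_sum, ← sum_mul, sum_sub_distrib, hp, hp', sum_const,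
          nsmul_eq_mul]
        ring

namespace IsBellmanFixedPoint

variable {L : ℕ} {𝒱 : Finset ℝ} {h𝒱 : 𝒱.Nonempty} {γ : ℝ} {P P' : ℕ → ℝ}
  {G G' : ℕ → ℝ → ℕ → ℝ} {U U' : ℕ → ℝ}

theorem antitone (hU : IsBellmanFixedPoint L 𝒱 h𝒱 γ P G U) (hγ0 : 0 ≤ γ) (hγ1 : γ < 1)
    (hPsum : ∑ ℓ ∈ Icc 1 L, P ℓ = 1)
    (hG : ∀ ℓ ∈ Icc 1 L, ∀ μ ∈ 𝒱, ∀ s, 0 ≤ G ℓ μ s ∧ G ℓ μ s ≤ P ℓ)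
    (hGs : ∀ ℓ ∈ Icc 1 L, ∀ μ : ℝ, ∀ s s' : ℕ, s ≤ s' → G ℓ μ s' ≤ G ℓ μ s)
    (hUa : BddAbove (Set.range U)) (hUb : BddBelow (Set.range U)) : Antitone U := by
  intro b a hba
  let f : {q : ℕ × ℕ // q.2 ≤ q.1} → ℝ := fun q => U q.1.1 - U q.1.2
  have hf : BddAbove (Set.range f) := bddAbove_range_sub_comp hUa hUb _ _
  have hstep : ∀ K, (∀ q, f q ≤ K) → ∀ q, f q ≤ 0 + γ * K := by
    rintro K hK ⟨⟨a, b⟩, hba⟩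
    simp only [f, hU a, hU b]
    simpa using sum_bellmanSummand_sub_le (Icc 1 L) h𝒱 hγ0 le_rfl rfl hPsum
      (fun ℓ hℓ μ hμ => (hG ℓ hℓ μ hμ a).1) (fun ℓ hℓ μ hμ => hG ℓ hℓ μ hμ b)
      (fun ℓ _ => hK ⟨(a + ℓ - 1, b + ℓ - 1), by omega⟩) (hK ⟨(a - 1, b - 1), by omega⟩)
      (fun ℓ hℓ μ _ hz => mul_nonpos_of_nonpos_of_nonneg (sub_nonpos.2 (hGs ℓ hℓ μ b a hba)) hz)
  simpa [f] using le_div_one_sub_of_forall_le_imp hf hγ1 hstep ⟨(a, b), hba⟩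

theorem sub_le (hU : IsBellmanFixedPoint L 𝒱 h𝒱 γ P G U)
    (hU' : IsBellmanFixedPoint L 𝒱 h𝒱 γ P' G' U') (hγ0 : 0 ≤ γ) (hγ1 : γ < 1) {ε V : ℝ}
    (hε : 0 ≤ ε) (hV : 0 ≤ V) (h𝒱V : ∀ μ ∈ 𝒱, μ ≤ V)
    (hPsum : ∑ ℓ ∈ Icc 1 L, P ℓ = 1) (hP'sum : ∑ ℓ ∈ Icc 1 L, P' ℓ = 1)
    (hG : ∀ ℓ ∈ Icc 1 L, ∀ μ ∈ 𝒱, ∀ s, 0 ≤ G ℓ μ s)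
    (hG' : ∀ ℓ ∈ Icc 1 L, ∀ μ ∈ 𝒱, ∀ s, 0 ≤ G' ℓ μ s ∧ G' ℓ μ s ≤ P' ℓ)
    (hGclose : ∀ ℓ ∈ Icc 1 L, ∀ μ ∈ 𝒱, ∀ s, G ℓ μ s - G' ℓ μ s ≤ ε)
    (hUanti : Antitone U) (hUa : BddAbove (Set.range U)) (hU'b : BddBelow (Set.range U'))
    (s : ℕ) :
    U s - U' s ≤ L * (ε * V) / (1 - γ) := by
  refine le_div_one_sub_of_forall_le_imp (bddAbove_range_sub_comp hUa hU'b id id) hγ1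
    (fun K hK s => ?_) s
  have hgain : ∀ ℓ ∈ Icc 1 L, ∀ μ ∈ 𝒱, 0 ≤ μ + γ * U (s + ℓ - 1) - γ * U (s - 1) →
      (G ℓ μ s - G' ℓ μ s) * (μ + γ * U (s + ℓ - 1) - γ * U (s - 1)) ≤ ε * V := by
    intro ℓ hℓ μ hμ hz
    have hUℓ : U (s + ℓ - 1) ≤ U (s - 1) := hUanti (by omega)
    have hzV : μ + γ * U (s + ℓ - 1) - γ * U (s - 1) ≤ V := by
      linarith [h𝒱V μ hμ, mul_le_mul_of_nonneg_left hUℓ hγ0]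
    calc _ ≤ ε * (μ + γ * U (s + ℓ - 1) - γ * U (s - 1)) :=
          mul_le_mul_of_nonneg_right (hGclose ℓ hℓ μ hμ s) hz
      _ ≤ ε * V := mul_le_mul_of_nonneg_left hzV hε
  change U s - U' s ≤ _
  rw [hU s, hU' s]
  simpa using sum_bellmanSummand_sub_le (Icc 1 L) h𝒱 hγ0 (mul_nonneg hε hV)
    (hPsum.trans hP'sum.symm) hP'sum (fun ℓ hℓ μ hμ => hG ℓ hℓ μ hμ s)
    (fun ℓ hℓ μ hμ => hG' ℓ hℓ μ hμ s) (fun ℓ _ => hK _) (hK _) hgain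

end IsBellmanFixedPoint

theorem stmt_12_general
    (L : ℕ) (V : ℝ) (hV : 0 < V)
    (𝒱 : Finset ℝ) (h𝒱ne : 𝒱.Nonempty) (h𝒱 : ∀ μ ∈ 𝒱, 0 ≤ μ ∧ μ ≤ V)
    (γ : ℝ) (hγ0 : 0 < γ) (hγ1 : γ < 1)
    (ε : ℝ) (hε : 0 ≤ ε)
    -- the true model (P, G)
    (P : ℕ → ℝ) (G : ℕ → ℝ → ℕ → ℝ)
    (hPsum : ∑ ℓ ∈ Finset.Icc 1 L, P ℓ = 1)
    (hG : ∀ ℓ ∈ Finset.Icc 1 L, ∀ μ ∈ 𝒱, ∀ s : ℕ, 0 ≤ G ℓ μ s ∧ G ℓ μ s ≤ P ℓ)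
    (hGs : ∀ ℓ ∈ Finset.Icc 1 L, ∀ μ : ℝ, ∀ s s' : ℕ, s ≤ s' → G ℓ μ s' ≤ G ℓ μ s)
    -- the estimated model (P̂, Ĝ)
    (P' : ℕ → ℝ) (G' : ℕ → ℝ → ℕ → ℝ)
    (hP'sum : ∑ ℓ ∈ Finset.Icc 1 L, P' ℓ = 1)
    (hG' : ∀ ℓ ∈ Finset.Icc 1 L, ∀ μ ∈ 𝒱, ∀ s : ℕ, 0 ≤ G' ℓ μ s ∧ G' ℓ μ s ≤ P' ℓ)
    (hG's : ∀ ℓ ∈ Finset.Icc 1 L, ∀ μ : ℝ, ∀ s s' : ℕ, s ≤ s' → G' ℓ μ s' ≤ G' ℓ μ s)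
    -- ε-closeness
    (hGclose : ∀ ℓ ∈ Finset.Icc 1 L, ∀ μ ∈ 𝒱, ∀ s : ℕ, |G ℓ μ s - G' ℓ μ s| ≤ ε)
    -- the two γ-discounted optimal value functions (Bellman fixed points)
    (U U' : ℕ → ℝ)
    (hUb : ∀ s, 0 ≤ U s ∧ U s ≤ V / (1 - γ))
    (hU'b : ∀ s, 0 ≤ U' s ∧ U' s ≤ V / (1 - γ))
    (hUfix : ∀ s, U s =
      ∑ ℓ ∈ Finset.Icc 1 L,
        (max 0 (𝒱.sup' h𝒱ne fun μ =>
            G ℓ μ s * (μ + γ * U (s + ℓ - 1) - γ * U (s - 1)))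
          + P ℓ * (γ * U (s - 1))))
    (hU'fix : ∀ s, U' s =
      ∑ ℓ ∈ Finset.Icc 1 L,
        (max 0 (𝒱.sup' h𝒱ne fun μ =>
            G' ℓ μ s * (μ + γ * U' (s + ℓ - 1) - γ * U' (s - 1)))
          + P' ℓ * (γ * U' (s - 1)))) :
    ∀ s : ℕ, |U s - U' s| ≤ 2 * V * L * ε / (1 - γ) := by
  have hU : IsBellmanFixedPoint L 𝒱 h𝒱ne γ P G U := hUfix
  have hU' : IsBellmanFixedPoint L 𝒱 h𝒱ne γ P' G' U' := hU'fix
  have hbdd (W : ℕ → ℝ) (hW : ∀ s, 0 ≤ W s ∧ W s ≤ V / (1 - γ)) :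
      BddAbove (Set.range W) ∧ BddBelow (Set.range W) :=
    ⟨⟨_, Set.forall_mem_range.2 fun s => (hW s).2⟩, ⟨_, Set.forall_mem_range.2 fun s => (hW s).1⟩⟩
  obtain ⟨hUa, hUb'⟩ := hbdd U hUb
  obtain ⟨hU'a, hU'b'⟩ := hbdd U' hU'b
  have h𝒱V (μ) (hμ : μ ∈ 𝒱) : μ ≤ V := (h𝒱 μ hμ).2
  intro s
  have hUU' := hU.sub_le hU' hγ0.le hγ1 hε hV.le h𝒱V hPsum hP'sum
    (fun ℓ hℓ μ hμ s => (hG ℓ hℓ μ hμ s).1) hG'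
    (fun ℓ hℓ μ hμ s => (abs_sub_le_iff.1 (hGclose ℓ hℓ μ hμ s)).1)
    (hU.antitone hγ0.le hγ1 hPsum hG hGs hUa hUb') hUa hU'b' s
  have hU'U := hU'.sub_le hU hγ0.le hγ1 hε hV.le h𝒱V hP'sum hPsum
    (fun ℓ hℓ μ hμ s => (hG' ℓ hℓ μ hμ s).1) hG
    (fun ℓ hℓ μ hμ s => (abs_sub_le_iff.1 (hGclose ℓ hℓ μ hμ s)).2)
    (hU'.antitone hγ0.le hγ1 hP'sum hG' hG's hU'a hU'b') hU'a hUb' s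
  calc |U s - U' s| ≤ L * (ε * V) / (1 - γ) := abs_sub_le_iff.2 ⟨hUU', hU'U⟩
    _ ≤ 2 * V * L * ε / (1 - γ) := by
      have : 0 ≤ V * L * ε := by positivity
      exact div_le_div_of_nonneg_right (by linarith) (by linarith)

/-- Infinite-horizon discounted robustness: if two models `(P,G)` and
`(P̂,Ĝ)` are ε-close, the γ-discounted optimal value functions satisfy
`|U*_γ(s) − Û*_γ(s)| ≤ 2𝕍𝕃ε/(1−γ)`. -/
theorem stmt_12
    (L : ℕ) (hL : 1 ≤ L) (V : ℝ) (hV : 0 < V)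
    (𝒱 : Finset ℝ) (h𝒱ne : 𝒱.Nonempty) (h𝒱 : ∀ μ ∈ 𝒱, 0 ≤ μ ∧ μ ≤ V)
    (γ : ℝ) (hγ0 : 0 < γ) (hγ1 : γ < 1)
    (ε : ℝ) (hε : 0 ≤ ε)
    -- the true model (P, G)
    (P : ℕ → ℝ) (G : ℕ → ℝ → ℕ → ℝ)
    (hPnn : ∀ ℓ, 0 ≤ P ℓ) (hPsum : ∑ ℓ ∈ Finset.Icc 1 L, P ℓ = 1)
    (hG : ∀ ℓ ∈ Finset.Icc 1 L, ∀ μ ∈ 𝒱, ∀ s : ℕ, 0 ≤ G ℓ μ s ∧ G ℓ μ s ≤ P ℓ)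
    (hGμ : ∀ ℓ ∈ Finset.Icc 1 L, ∀ μ μ' : ℝ, ∀ s : ℕ, μ ≤ μ' → G ℓ μ' s ≤ G ℓ μ s)
    (hGs : ∀ ℓ ∈ Finset.Icc 1 L, ∀ μ : ℝ, ∀ s s' : ℕ, s ≤ s' → G ℓ μ s' ≤ G ℓ μ s)
    -- the estimated model (P̂, Ĝ)
    (P' : ℕ → ℝ) (G' : ℕ → ℝ → ℕ → ℝ)
    (hP'nn : ∀ ℓ, 0 ≤ P' ℓ) (hP'sum : ∑ ℓ ∈ Finset.Icc 1 L, P' ℓ = 1)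
    (hG' : ∀ ℓ ∈ Finset.Icc 1 L, ∀ μ ∈ 𝒱, ∀ s : ℕ, 0 ≤ G' ℓ μ s ∧ G' ℓ μ s ≤ P' ℓ)
    (hG'μ : ∀ ℓ ∈ Finset.Icc 1 L, ∀ μ μ' : ℝ, ∀ s : ℕ, μ ≤ μ' → G' ℓ μ' s ≤ G' ℓ μ s)
    (hG's : ∀ ℓ ∈ Finset.Icc 1 L, ∀ μ : ℝ, ∀ s s' : ℕ, s ≤ s' → G' ℓ μ s' ≤ G' ℓ μ s)
    -- ε-closeness
    (hGclose : ∀ ℓ ∈ Finset.Icc 1 L, ∀ μ ∈ 𝒱, ∀ s : ℕ, |G ℓ μ s - G' ℓ μ s| ≤ ε)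
    (hPclose : ∀ ℓ ∈ Finset.Icc 1 L, |P ℓ - P' ℓ| ≤ ε)
    -- the two γ-discounted optimal value functions (Bellman fixed points)
    (U U' : ℕ → ℝ)
    (hUb : ∀ s, 0 ≤ U s ∧ U s ≤ V / (1 - γ))
    (hU'b : ∀ s, 0 ≤ U' s ∧ U' s ≤ V / (1 - γ))
    (hUfix : ∀ s, U s =
      ∑ ℓ ∈ Finset.Icc 1 L,
        (max 0 (𝒱.sup' h𝒱ne fun μ =>
            G ℓ μ s * (μ + γ * U (s + ℓ - 1) - γ * U (s - 1)))
          + P ℓ * (γ * U (s - 1))))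
    (hU'fix : ∀ s, U' s =
      ∑ ℓ ∈ Finset.Icc 1 L,
        (max 0 (𝒱.sup' h𝒱ne fun μ =>
            G' ℓ μ s * (μ + γ * U' (s + ℓ - 1) - γ * U' (s - 1)))
          + P' ℓ * (γ * U' (s - 1)))) :
    ∀ s : ℕ, |U s - U' s| ≤ 2 * V * L * ε / (1 - γ) :=
  stmt_12_general L V hV 𝒱 h𝒱ne h𝒱 γ hγ0 hγ1 ε hε P G hPsum hG hGs P' G' hP'sum hG' hG's hGclose U
    U' hUb hU'b hUfix hU'fix
end

section
/- Fix a discount factor γ ∈ (0,1). Let U_γ and U^η_γ be functions ℕ → ℝ with values in [0, 𝕍/(1−γ)] satisfying the γ-discounted Bellman fixed-point equation with prices ranging over [0,𝕍] and over the grid {k·η : k ∈ ℕ, k·η ≤ 𝕍}, respectively. Then for every state s ∈ ℕ: 0 ≤ U_γ(s) − U^η_γ(s) ≤ η/(1−γ). -/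
/-!
Write `D = U − U^η`. At every state the two Bellman right-hand sides differ by at most
`η + γ · sup D` and by at least `γ · inf D`. Changing the continuation values moves the value of
each offer by `γ` times a convex combination of values of `D`; rounding a price down to the grid
loses at most `η` of revenue because acceptance is nonincreasing in the price; and every grid
price is an admissible price. Averaging over the lengths gives `sup D ≤ η + γ · sup D` and
`γ · inf D ≤ inf D`, so `0 ≤ D ≤ η / (1 − γ)` since `D` is bounded and `γ < 1`.
-/

open Set

section BellmanTerm

variable {ι κ : Type*} (r : ℝ → ℝ) (γ : ℝ)

/-- The summand of the Bellman equation for one length: `r μ` is the acceptance probability at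
price `μ`, `a` the continuation value after a sale and `b` the one after no sale. -/
noncomputable def bellmanTerm (p : ι → ℝ) (a b : ℝ) : ℝ :=
  max 0 (⨆ i, r (p i) * (p i + γ * a - γ * b)) + γ * b

variable {r γ}

lemma bddAbove_range_offer (hr : ∀ μ, r μ ∈ Icc 0 1) {p : ι → ℝ} (hp : BddAbove (range p))
    (a b : ℝ) : BddAbove (range fun i => r (p i) * (p i + γ * a - γ * b)) := by
  obtain ⟨B, hB⟩ := hp
  refine ⟨max 0 (B + γ * a - γ * b), forall_mem_range.2 fun i => ?_⟩
  have hpi := hB (mem_range_self i)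
  rcases le_total 0 (p i + γ * a - γ * b) with h | h
  · exact (mul_le_of_le_one_left h (hr _).2).trans (le_max_of_le_right (by linarith))
  · exact (mul_nonpos_of_nonneg_of_nonpos (hr _).1 h).trans (le_max_left _ _)

lemma bellmanTerm_le_add (hr : ∀ μ, r μ ∈ Icc 0 1) (hγ : 0 ≤ γ) {p : ι → ℝ}
    (hp : BddAbove (range p)) {a b a' b' M : ℝ} (ha : a - a' ≤ M) (hb : b - b' ≤ M) :
    bellmanTerm r γ p a b ≤ bellmanTerm r γ p a' b' + γ * M := by
  unfold bellmanTerm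
  set S' := ⨆ i, r (p i) * (p i + γ * a' - γ * b')
  have hbM : γ * (b - b') ≤ γ * M := mul_le_mul_of_nonneg_left hb hγ
  have h0 : 0 ≤ max 0 S' + γ * b' + γ * M - γ * b := by linarith [le_max_left 0 S']
  suffices ∀ i, r (p i) * (p i + γ * a - γ * b) ≤ max 0 S' + γ * b' + γ * M - γ * b by
    linarith [max_le h0 (Real.iSup_le this h0)]
  intro i
  obtain ⟨hr0, hr1⟩ := hr (p i)
  have hS' : r (p i) * (p i + γ * a' - γ * b') ≤ S' := le_ciSup (bddAbove_range_offer hr hp _ _) i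
  have hconv : r (p i) * (a - a') + (1 - r (p i)) * (b - b') ≤ M := by
    nlinarith [mul_le_mul_of_nonneg_left ha hr0, mul_le_mul_of_nonneg_left hb (sub_nonneg.2 hr1)]
  have hshift : r (p i) * (p i + γ * a - γ * b) = r (p i) * (p i + γ * a' - γ * b') + γ * b'
      - γ * b + γ * (r (p i) * (a - a') + (1 - r (p i)) * (b - b')) := by ring
  nlinarith [le_max_right 0 S', mul_le_mul_of_nonneg_left hconv hγ]

lemma bellmanTerm_le_of_subset {p : ι → ℝ} {p' : κ → ℝ} (hr : ∀ μ, r μ ∈ Icc 0 1)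
    (hp : BddAbove (range p)) (hsub : range p' ⊆ range p) (a b : ℝ) :
    bellmanTerm r γ p' a b ≤ bellmanTerm r γ p a b := by
  unfold bellmanTerm
  refine add_le_add_left ?_ _
  set S := ⨆ i, r (p i) * (p i + γ * a - γ * b)
  have h0 : 0 ≤ max 0 S := le_max_left 0 S
  refine max_le h0 (Real.iSup_le (fun j => ?_) h0)
  obtain ⟨i, hi⟩ := hsub (mem_range_self j)
  rw [← hi]
  exact (le_ciSup (bddAbove_range_offer hr hp a b) i).trans (le_max_right 0 S)

lemma bellmanTerm_le_of_round_down (hr : ∀ μ, r μ ∈ Icc 0 1) (hanti : Antitone r) {η : ℝ}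
    (hη : 0 ≤ η) {p : ι → ℝ} {p' : κ → ℝ} (hp' : BddAbove (range p'))
    (hround : ∀ i, ∃ j, p' j ≤ p i ∧ p i ≤ p' j + η) (a b : ℝ) :
    bellmanTerm r γ p a b ≤ bellmanTerm r γ p' a b + η := by
  unfold bellmanTerm
  set S' := ⨆ j, r (p' j) * (p' j + γ * a - γ * b)
  have h0 : 0 ≤ max 0 S' + η := add_nonneg (le_max_left 0 S') hη
  suffices ∀ i, r (p i) * (p i + γ * a - γ * b) ≤ max 0 S' + η by
    linarith [max_le h0 (Real.iSup_le this h0)]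
  intro i
  obtain ⟨j, hji, hij⟩ := hround i
  obtain ⟨hr0, hr1⟩ := hr (p' j)
  rcases le_total 0 (p i + γ * a - γ * b) with h | h
  · calc r (p i) * (p i + γ * a - γ * b) ≤ r (p' j) * (p i + γ * a - γ * b) :=
          mul_le_mul_of_nonneg_right (hanti hji) h
      _ ≤ r (p' j) * (p' j + γ * a - γ * b) + η := by nlinarith
      _ ≤ max 0 S' + η := by
          gcongr
          exact (le_ciSup (bddAbove_range_offer hr hp' a b) j).trans (le_max_right 0 S')
  · exact (mul_nonpos_of_nonneg_of_nonpos (hr _).1 h).trans h0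

theorem bellmanTerm_sub_bellmanTerm_mem_Icc (hr : ∀ μ, r μ ∈ Icc 0 1) (hanti : Antitone r)
    (hγ : 0 ≤ γ) {η : ℝ} (hη : 0 ≤ η) {p : ι → ℝ} {p' : κ → ℝ} (hp : BddAbove (range p))
    (hp' : BddAbove (range p')) (hsub : range p' ⊆ range p)
    (hround : ∀ i, ∃ j, p' j ≤ p i ∧ p i ≤ p' j + η) {a b a' b' m M : ℝ}
    (ha : a - a' ∈ Icc m M) (hb : b - b' ∈ Icc m M) :
    bellmanTerm r γ p a b - bellmanTerm r γ p' a' b' ∈ Icc (γ * m) (η + γ * M) := by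
  constructor
  · have h₁ := bellmanTerm_le_add (a := a') (b := b') (a' := a) (b' := b) (M := -m) hr hγ hp' (by linarith [ha.1]) (by linarith [hb.1])
    have h₂ := bellmanTerm_le_of_subset (γ := γ) hr hp hsub a b
    linarith
  · have h₁ := bellmanTerm_le_add hr hγ hp ha.2 hb.2
    have h₂ := bellmanTerm_le_of_round_down (γ := γ) hr hanti hη hp' hround a' b'
    linarith

end BellmanTerm

section PriceGrid

variable {V η : ℝ}

lemma range_grid_subset_Icc (hV : 0 ≤ V) (hη : 0 < η) :
    range (fun k : Fin (⌊V / η⌋₊ + 1) => (k.1 : ℝ) * η) ⊆ Icc 0 V := by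
  rintro _ ⟨k, rfl⟩
  have hk : (k.1 : ℝ) ≤ V / η :=
    (Nat.cast_le.2 (Nat.lt_succ_iff.1 k.2)).trans (Nat.floor_le (by positivity))
  exact ⟨by positivity, (le_div_iff₀ hη).1 hk⟩

lemma exists_grid_le_le_add (hη : 0 < η) {μ : ℝ} (hμ : μ ∈ Icc 0 V) :
    ∃ k : Fin (⌊V / η⌋₊ + 1), (k.1 : ℝ) * η ≤ μ ∧ μ ≤ k.1 * η + η := by
  have hk : ⌊μ / η⌋₊ < ⌊V / η⌋₊ + 1 :=
    Nat.lt_succ_of_le (Nat.floor_le_floor (div_le_div_of_nonneg_right hμ.2 hη.le))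
  refine ⟨⟨⌊μ / η⌋₊, hk⟩, (le_div_iff₀ hη).1 (Nat.floor_le (div_nonneg hμ.1 hη.le)), ?_⟩
  have := (div_lt_iff₀ hη).1 (Nat.lt_floor_add_one (μ / η))
  linarith

end PriceGrid

section Contraction

variable {α : Type*} {D : α → ℝ} {c γ : ℝ}

lemma le_div_one_sub_of_forall_le_add_mul_iSup (hD : BddAbove (range D)) (hγ : γ < 1)
    (h : ∀ t, D t ≤ c + γ * ⨆ t, D t) (t : α) : D t ≤ c / (1 - γ) := by
  have : Nonempty α := ⟨t⟩
  have hsup : ⨆ t, D t ≤ c + γ * ⨆ t, D t := ciSup_le h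
  rw [le_div_iff₀ (sub_pos.2 hγ)]
  nlinarith [le_ciSup hD t]

lemma div_one_sub_le_of_forall_add_mul_iInf_le (hD : BddBelow (range D)) (hγ : γ < 1)
    (h : ∀ t, c + γ * ⨅ t, D t ≤ D t) (t : α) : c / (1 - γ) ≤ D t := by
  have : Nonempty α := ⟨t⟩
  have hinf : c + γ * ⨅ t, D t ≤ ⨅ t, D t := le_ciInf h
  rw [div_le_iff₀ (sub_pos.2 hγ)]
  nlinarith [ciInf_le hD t]

end Contraction

theorem stmt_17_general
    (L : ℕ)
    (P : ℕ → ℝ) (hPnn : ∀ ℓ, 0 ≤ P ℓ)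
    (hPsum : ∑ ℓ ∈ Finset.Icc 1 L, P ℓ = 1)
    (V : ℝ) (hV : 0 < V) (η : ℝ) (hη : 0 < η)
    (γ : ℝ) (hγ0 : 0 < γ) (hγ1 : γ < 1)
    (q : ℝ → ℕ → ℕ → ℝ)
    (hq01 : ∀ μ s ℓ, 0 ≤ q μ s ℓ ∧ q μ s ℓ ≤ 1)
    (hqμ : ∀ μ μ' s ℓ, μ ≤ μ' → q μ' s ℓ ≤ q μ s ℓ)
    -- γ-discounted Bellman fixed point with prices in [0, V]
    (U : ℕ → ℝ)
    (hUb : ∀ s, 0 ≤ U s ∧ U s ≤ V / (1 - γ))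
    (hUfix : ∀ s, U s =
      ∑ ℓ ∈ Finset.Icc 1 L, P ℓ *
        (max 0 (⨆ μ : Set.Icc (0 : ℝ) V,
            q μ.1 s ℓ * (μ.1 + γ * U (s + ℓ - 1) - γ * U (s - 1)))
          + γ * U (s - 1)))
    -- γ-discounted Bellman fixed point with prices on the grid {k·η : k·η ≤ V}
    (Ug : ℕ → ℝ)
    (hUgb : ∀ s, 0 ≤ Ug s ∧ Ug s ≤ V / (1 - γ))
    (hUgfix : ∀ s, Ug s =
      ∑ ℓ ∈ Finset.Icc 1 L, P ℓ *
        (max 0 (⨆ k : Fin (Nat.floor (V / η) + 1),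
            q (k.1 * η) s ℓ * (k.1 * η + γ * Ug (s + ℓ - 1) - γ * Ug (s - 1)))
          + γ * Ug (s - 1))) :
    ∀ s : ℕ, 0 ≤ U s - Ug s ∧ U s - Ug s ≤ η / (1 - γ) := by
  set D : ℕ → ℝ := fun t => U t - Ug t
  have hDbdd : BddAbove (range D) ∧ BddBelow (range D) := by
    refine ⟨⟨V / (1 - γ), ?_⟩, ⟨-(V / (1 - γ)), ?_⟩⟩ <;> rintro _ ⟨t, rfl⟩ <;>
      linarith [hUb t, hUgb t]
  have hDmem : ∀ t, D t ∈ Icc (⨅ t, D t) (⨆ t, D t) :=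
    fun t => ⟨ciInf_le hDbdd.2 t, le_ciSup hDbdd.1 t⟩
  have hstep : ∀ s, D s ∈ Icc (γ * ⨅ t, D t) (η + γ * ⨆ t, D t) := by
    intro s
    have hsplit : D s = ∑ ℓ ∈ Finset.Icc 1 L, P ℓ *
        (bellmanTerm (q · s ℓ) γ (Subtype.val : Icc 0 V → ℝ) (U (s + ℓ - 1)) (U (s - 1)) -
          bellmanTerm (q · s ℓ) γ (fun k : Fin (⌊V / η⌋₊ + 1) => (k.1 : ℝ) * η)
            (Ug (s + ℓ - 1)) (Ug (s - 1))) := by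
      simp only [D, mul_sub, Finset.sum_sub_distrib, hUfix s, hUgfix s, bellmanTerm]
    rw [hsplit]
    refine (convex_Icc _ _).sum_mem (fun ℓ _ => hPnn ℓ) hPsum fun ℓ _ =>
      bellmanTerm_sub_bellmanTerm_mem_Icc (fun μ => hq01 μ s ℓ) (fun μ μ' => hqμ μ μ' s ℓ)
        hγ0.le hη.le ⟨V, fun _ ⟨μ, hμ⟩ => hμ ▸ μ.2.2⟩ (finite_range _).bddAbove
        ((range_grid_subset_Icc hV.le hη).trans Subtype.range_coe.superset)
        (fun μ => exists_grid_le_le_add hη μ.2) (hDmem _) (hDmem _)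
  intro s
  refine ⟨?_, le_div_one_sub_of_forall_le_add_mul_iSup hDbdd.1 hγ1 (fun t => (hstep t).2) s⟩
  simpa [D] using div_one_sub_le_of_forall_add_mul_iInf_le (c := 0) hDbdd.2 hγ1
    (fun t => by simpa using (hstep t).1) s

/-- Discounted price-grid discretization: for γ-discounted Bellman fixed
points with prices in `[0,𝕍]` and on the grid of multiples of `η` respectively,
`0 ≤ U_γ(s) − U^η_γ(s) ≤ η/(1−γ)`. -/
theorem stmt_17
    (L : ℕ) (hL : 1 ≤ L)
    (P : ℕ → ℝ) (hPnn : ∀ ℓ, 0 ≤ P ℓ)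
    (hPsum : ∑ ℓ ∈ Finset.Icc 1 L, P ℓ = 1)
    (V : ℝ) (hV : 0 < V) (η : ℝ) (hη : 0 < η)
    (γ : ℝ) (hγ0 : 0 < γ) (hγ1 : γ < 1)
    (q : ℝ → ℕ → ℕ → ℝ)
    (hq01 : ∀ μ s ℓ, 0 ≤ q μ s ℓ ∧ q μ s ℓ ≤ 1)
    (hqμ : ∀ μ μ' s ℓ, μ ≤ μ' → q μ' s ℓ ≤ q μ s ℓ)
    -- γ-discounted Bellman fixed point with prices in [0, V]
    (U : ℕ → ℝ)
    (hUb : ∀ s, 0 ≤ U s ∧ U s ≤ V / (1 - γ))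
    (hUfix : ∀ s, U s =
      ∑ ℓ ∈ Finset.Icc 1 L, P ℓ *
        (max 0 (⨆ μ : Set.Icc (0 : ℝ) V,
            q μ.1 s ℓ * (μ.1 + γ * U (s + ℓ - 1) - γ * U (s - 1)))
          + γ * U (s - 1)))
    -- γ-discounted Bellman fixed point with prices on the grid {k·η : k·η ≤ V}
    (Ug : ℕ → ℝ)
    (hUgb : ∀ s, 0 ≤ Ug s ∧ Ug s ≤ V / (1 - γ))
    (hUgfix : ∀ s, Ug s =
      ∑ ℓ ∈ Finset.Icc 1 L, P ℓ *
        (max 0 (⨆ k : Fin (Nat.floor (V / η) + 1),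
            q (k.1 * η) s ℓ * (k.1 * η + γ * Ug (s + ℓ - 1) - γ * Ug (s - 1)))
          + γ * Ug (s - 1))) :
    ∀ s : ℕ, 0 ≤ U s - Ug s ∧ U s - Ug s ≤ η / (1 - γ) :=
  stmt_17_general L P hPnn hPsum V hV η hη γ hγ0 hγ1 q hq01 hqμ U hUb hUfix Ug hUgb hUgfix
end
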